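/- arXiv:2108.11015 — 9 statements merged into one kernel-verified Lean document; each statement's English description precedes it below -/
import Mathlib

section
/- Let b_0, ..., b_{k-1} be linearly independent vectors in ℝ^n forming the columns of B, and let D = B·(B^T·B)^{-1} with columns d_0, ..., d_{k-1}. Then the length of the last Gram-Schmidt vector of B satisfies ‖b̃_{k-1}‖₂ = 1/‖d_{k-1}‖₂. -/
/-!
Since `Bᵀ D = 1`, the last column `d` of `D` is orthogonal to `b_0, …, b_{k-1}`, satisfies
`⟪b_k, d⟫ = 1`, and lies in the span of the `b_j`. The last Gram–Schmidt vector `g` lies in the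
same span, is orthogonal to the earlier `b_j`, and differs from `b_k` by a vector orthogonal to
`d`, so `⟪g, d⟫ = 1`. Hence `d - g / ‖g‖²` lies in the span of the Gram–Schmidt vectors and is
orthogonal to all of them, so `d = g / ‖g‖²` and `‖d‖ = 1 / ‖g‖`.
-/

open Submodule Matrix Finset InnerProductSpace
open scoped ComplexOrder

section
variable {𝕜 E : Type*} [RCLike 𝕜] [NormedAddCommGroup E] [InnerProductSpace 𝕜 E]

local notation "⟪" x ", " y "⟫" => inner 𝕜 x y

theorem span_le_orthogonal_singleton {s : Set E} {u : E} (h : ∀ v ∈ s, ⟪v, u⟫ = 0) :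
    span 𝕜 s ≤ (𝕜 ∙ u)ᗮ :=
  span_le.mpr fun v hv => mem_orthogonal_singleton_iff_inner_left.mpr (h v hv)

theorem eq_zero_of_mem_span_of_forall_inner_eq_zero {s : Set E} {u : E} (hu : u ∈ span 𝕜 s)
    (h : ∀ v ∈ s, ⟪v, u⟫ = 0) : u = 0 :=
  inner_self_eq_zero.mp <|
    mem_orthogonal_singleton_iff_inner_left.mp (span_le_orthogonal_singleton h hu)

theorem inner_sum_inv_gram_smul {ι : Type*} [Fintype ι] [DecidableEq ι] {b : ι → E}
    (hb : LinearIndependent 𝕜 b) (i j : ι) :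
    ⟪b j, ∑ l, (gram 𝕜 b)⁻¹ l i • b l⟫ = if j = i then 1 else 0 := by
  have hG : gram 𝕜 b * (gram 𝕜 b)⁻¹ = 1 :=
    mul_nonsing_inv _ ((isUnit_iff_isUnit_det _).mp (posDef_gram_of_linearIndependent hb).isUnit)
  simpa [inner_sum, inner_smul_right, mul_apply, one_apply, mul_comm] using
    congrFun (congrFun hG j) i

variable {ι : Type*} [LinearOrder ι] [LocallyFiniteOrderBot ι] [WellFoundedLT ι]

theorem inner_gramSchmidt_eq_zero_of_lt {b : ι → E} {d : E} {i j : ι}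
    (hd : ∀ l < i, ⟪b l, d⟫ = 0) (hj : j < i) : ⟪gramSchmidt 𝕜 b j, d⟫ = 0 := by
  have hspan : span 𝕜 (gramSchmidt 𝕜 b '' Set.Iio i) ≤ (𝕜 ∙ d)ᗮ := by
    rw [span_gramSchmidt_Iio]
    exact span_le_orthogonal_singleton (by rintro _ ⟨l, hl, rfl⟩; exact hd l hl)
  exact mem_orthogonal_singleton_iff_inner_left.mp (hspan (subset_span ⟨j, hj, rfl⟩))

theorem inner_gramSchmidt_eq_inner_of_forall_lt {b : ι → E} {d : E} {i : ι}
    (hd : ∀ l < i, ⟪b l, d⟫ = 0) : ⟪gramSchmidt 𝕜 b i, d⟫ = ⟪b i, d⟫ := by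
  rw [gramSchmidt_def 𝕜 b i, inner_sub_left, sum_inner, sub_eq_self]
  refine sum_eq_zero fun j hj => ?_
  rw [starProjection_singleton, inner_smul_left,
    inner_gramSchmidt_eq_zero_of_lt hd (mem_Iio.mp hj), mul_zero]

theorem eq_inv_norm_sq_smul_gramSchmidt {b : ι → E} (hb : LinearIndependent 𝕜 b) {d : E} {i : ι}
    (hd_mem : d ∈ span 𝕜 (b '' Set.Iic i)) (hd_lt : ∀ l < i, ⟪b l, d⟫ = 0)
    (hd_self : ⟪b i, d⟫ = 1) :
    d = ((‖gramSchmidt 𝕜 b i‖ : 𝕜) ^ 2)⁻¹ • gramSchmidt 𝕜 b i := by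
  set g := gramSchmidt 𝕜 b
  have hg : (‖g i‖ : 𝕜) ≠ 0 := by
    exact_mod_cast norm_ne_zero_iff.mpr (gramSchmidt_ne_zero (𝕜 := 𝕜) i hb)
  rw [← sub_eq_zero]
  refine eq_zero_of_mem_span_of_forall_inner_eq_zero (𝕜 := 𝕜) (s := g '' Set.Iic i) ?_ ?_
  · rw [span_gramSchmidt_Iic]
    exact sub_mem hd_mem (smul_mem _ _ (gramSchmidt_mem_span 𝕜 b le_rfl))
  · rintro _ ⟨j, hj, rfl⟩
    rw [inner_sub_right, inner_smul_right]
    rcases (Set.mem_Iic.mp hj).lt_or_eq with hji | rfl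
    · rw [inner_gramSchmidt_eq_zero_of_lt hd_lt hji, gramSchmidt_orthogonal 𝕜 b hji.ne, mul_zero,
        sub_zero]
    · rw [inner_gramSchmidt_eq_inner_of_forall_lt hd_lt, hd_self, inner_self_eq_norm_sq_to_K,
        inv_mul_cancel₀ (pow_ne_zero 2 hg), sub_self]

end

theorem stmt3 (n k : ℕ) (b : Fin (k + 1) → EuclideanSpace ℝ (Fin n))
    (hb : LinearIndependent ℝ b)
    (B : Matrix (Fin n) (Fin (k + 1)) ℝ) (hB : ∀ i j, B i j = b j i)
    (D : Matrix (Fin n) (Fin (k + 1)) ℝ)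
    (hD : D = B * (Matrix.transpose B * B)⁻¹) :
    haveI : WellFoundedLT (Fin (k + 1)) := Finite.to_wellFoundedLT
    ‖InnerProductSpace.gramSchmidt ℝ b (Fin.last k)‖ = 1 / Real.sqrt (∑ i, D i (Fin.last k) ^ 2) := by
  have hgram : Bᵀ * B = gram ℝ b := by
    ext i j
    simp [mul_apply, hB, PiLp.inner_apply, mul_comm]
  set d : EuclideanSpace ℝ (Fin n) := ∑ l, (gram ℝ b)⁻¹ l (Fin.last k) • b l
  have hD_col : ∀ r, D r (Fin.last k) = d r := by
    intro r
    simp [d, hD, hgram, mul_apply, hB, mul_comm]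
  have hd_inner := inner_sum_inv_gram_smul hb (Fin.last k)
  have hd : d = (‖gramSchmidt ℝ b (Fin.last k)‖ ^ 2)⁻¹ • gramSchmidt ℝ b (Fin.last k) :=
    eq_inv_norm_sq_smul_gramSchmidt hb
      (sum_mem fun l _ => smul_mem _ _ (subset_span ⟨l, Fin.le_last l, rfl⟩))
      (fun l hl => by rw [hd_inner, if_neg hl.ne]) (by rw [hd_inner, if_pos rfl])
  have hnorm : Real.sqrt (∑ r, D r (Fin.last k) ^ 2) = ‖d‖ := by
    simp [EuclideanSpace.norm_eq, hD_col]
  have hg : gramSchmidt ℝ b (Fin.last k) ≠ 0 := gramSchmidt_ne_zero _ hb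
  rw [hnorm, hd, norm_smul, norm_inv, norm_pow, norm_norm]
  field_simp
end

section
/- Let C = F_n^{-1}·Λ·F_n be a real n×n circulant matrix with all eigenvalues λ_0, ..., λ_{n-1} nonzero. Then the length of the last Gram-Schmidt vector of the columns of C satisfies ‖C̃_{n-1}‖₂ ≥ (1/√n) · min_{0≤i≤n-1} |λ_i|. -/
/-!
Let `a` be the last index. If a vector `r` satisfies `⟪r, b j⟫ = δ_{j a}`, then `r` is orthogonal
to `b 0, …, b (a - 1)` and hence to their Gram–Schmidt vectors, so `⟪r, b̃_a⟫ = ⟪r, b a⟫ = 1` and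
Cauchy–Schwarz gives `‖b̃_a‖ ≥ 1 / ‖r‖`. Since the circulant matrix is diagonalised by the
Fourier vectors `i ↦ ω ^ (t (a - i))` with eigenvalues `λ_t`, such an `r` is
`N⁻¹ ∑_t λ_t⁻¹ ω ^ (t (a - i))`; each of its `N` entries has modulus at most `1 / min |λ_t|`,
so `‖r‖ ≤ √N / min |λ_t|`.
-/

open Finset InnerProductSpace

namespace IsPrimitiveRoot

variable {N : ℕ} [NeZero N] {ω : ℂ}

theorem pow_mul_val_add (hω : IsPrimitiveRoot ω N) (t : ℕ) (a a' : Fin N) :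
    ω ^ (t * (a + a').val) = ω ^ (t * a.val) * ω ^ (t * a'.val) := by
  rw [← pow_add, (hω.isOfFinOrder (NeZero.ne N)).pow_eq_pow_iff_modEq, ← hω.eq_orderOf, ← mul_add,
    Fin.val_add]
  exact (Nat.mod_modEq _ _).mul_left t

theorem sum_fin_pow_mul_val (hω : IsPrimitiveRoot ω N) (k : Fin N) :
    ∑ t : Fin N, ω ^ (t.val * k.val) = if k = 0 then (N : ℂ) else 0 := by
  split_ifs with hk
  · simp [hk]
  · have hk' : ω ^ k.val ≠ 1 := hω.pow_ne_one_of_pos_of_lt (Fin.val_ne_zero_iff.mpr hk) k.is_lt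
    simp_rw [mul_comm _ k.val, pow_mul]
    rw [Fin.sum_univ_eq_sum_range (fun t => (ω ^ k.val) ^ t), geom_sum_eq hk', ← pow_mul,
      mul_comm, pow_mul, hω.pow_eq_one, one_pow, sub_self, zero_div]

end IsPrimitiveRoot

namespace Matrix

variable {N : ℕ} [NeZero N] {ω : ℂ} {c lam : Fin N → ℂ}

theorem circulant_mulVec_pow_mul_val_sub (hω : IsPrimitiveRoot ω N)
    (hlam : ∀ t, lam t = ∑ j, c j * ω ^ (t.val * j.val)) (t a : Fin N) :
    circulant c *ᵥ (fun i => ω ^ (t.val * (a - i).val)) =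
      lam t • fun i => ω ^ (t.val * (a - i).val) := by
  ext j
  simp only [mulVec, dotProduct, circulant_apply, Pi.smul_apply, smul_eq_mul, hlam, sum_mul]
  rw [← (Equiv.subLeft j).sum_comp]
  refine sum_congr rfl fun m _ => ?_
  rw [Equiv.subLeft_apply, sub_sub_cancel, show a - (j - m) = (a - j) + m by abel,
    hω.pow_mul_val_add]
  ring

end Matrix

section CirculantDual

open Matrix

variable {N : ℕ} [NeZero N] {ω : ℂ} {c lam : Fin N → ℂ}

noncomputable def circulantDual (ω : ℂ) (lam : Fin N → ℂ) (a : Fin N) : Fin N → ℂ :=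
  (N : ℂ)⁻¹ • ∑ t, (lam t)⁻¹ • fun i => ω ^ (t.val * (a - i).val)

theorem circulant_mulVec_circulantDual (hω : IsPrimitiveRoot ω N)
    (hlam : ∀ t, lam t = ∑ j, c j * ω ^ (t.val * j.val)) (hne : ∀ t, lam t ≠ 0) (a : Fin N) :
    circulant c *ᵥ circulantDual ω lam a = Pi.single a 1 := by
  ext j
  simp only [circulantDual, mulVec_smul, mulVec_sum, circulant_mulVec_pow_mul_val_sub hω hlam,
    smul_smul, inv_mul_cancel₀ (hne _), one_smul, Pi.smul_apply, Finset.sum_apply, smul_eq_mul]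
  rw [hω.sum_fin_pow_mul_val, Pi.single_apply]
  simp_rw [sub_eq_zero, eq_comm (a := a)]
  split_ifs <;> simp [NeZero.ne N]

theorem norm_circulantDual_apply_le (hω : ‖ω‖ = 1) {m : ℝ} (hm : 0 < m)
    (hlam : ∀ t, m ≤ ‖lam t‖) (a i : Fin N) : ‖circulantDual ω lam a i‖ ≤ m⁻¹ := by
  have hterm : ∀ t, ‖(lam t)⁻¹ * ω ^ (t.val * (a - i).val)‖ ≤ m⁻¹ := fun t => by
    rw [norm_mul, norm_inv, norm_pow, hω, one_pow, mul_one]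
    exact inv_anti₀ hm (hlam t)
  calc ‖circulantDual ω lam a i‖
      = (N : ℝ)⁻¹ * ‖∑ t, (lam t)⁻¹ * ω ^ (t.val * (a - i).val)‖ := by
        simp [circulantDual]
    _ ≤ (N : ℝ)⁻¹ * (N * m⁻¹) := by
        gcongr
        simpa using norm_sum_le_of_le univ fun t _ => hterm t
    _ = m⁻¹ := by field_simp [NeZero.ne N]

end CirculantDual

section GramSchmidt

variable {𝕜 E ι : Type*} [RCLike 𝕜] [NormedAddCommGroup E] [InnerProductSpace 𝕜 E]
  [LinearOrder ι] [LocallyFiniteOrderBot ι] [WellFoundedLT ι]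

theorem inner_gramSchmidt_eq_of_forall_lt {b : ι → E} {r : E} {i : ι}
    (h : ∀ j < i, inner 𝕜 r (b j) = 0) : inner 𝕜 r (gramSchmidt 𝕜 b i) = inner 𝕜 r (b i) := by
  have h_span : ∀ j < i, inner 𝕜 r (gramSchmidt 𝕜 b j) = 0 := by
    intro j hj
    refine Submodule.span_induction (p := fun x _ => inner 𝕜 r x = 0) ?_ ?_ ?_ ?_
      (gramSchmidt_mem_span 𝕜 b le_rfl)
    · rintro _ ⟨k, hk, rfl⟩
      exact h k (lt_of_le_of_lt hk hj)
    · exact inner_zero_right r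
    · intro x y _ _ hx hy
      rw [inner_add_right, hx, hy, add_zero]
    · intro a x _ hx
      rw [inner_smul_right, hx, mul_zero]
  conv_rhs => rw [gramSchmidt_def'' 𝕜 b i]
  rw [inner_add_right, inner_sum, sum_eq_zero fun j hj => by
    rw [inner_smul_right, h_span j (mem_Iio.mp hj), mul_zero], add_zero]

theorem one_le_norm_mul_norm_gramSchmidt {b : ι → E} {r : E} {i : ι}
    (h : ∀ j < i, inner 𝕜 r (b j) = 0) (hi : inner 𝕜 r (b i) = 1) :
    1 ≤ ‖r‖ * ‖gramSchmidt 𝕜 b i‖ := by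
  simpa [inner_gramSchmidt_eq_of_forall_lt h, hi] using
    norm_inner_le_norm (𝕜 := 𝕜) r (gramSchmidt 𝕜 b i)

end GramSchmidt

theorem EuclideanSpace.norm_le_sqrt_card_mul {ι : Type*} [Fintype ι] {x : EuclideanSpace ℝ ι}
    {C : ℝ} (h : ∀ i, ‖x i‖ ≤ C) : ‖x‖ ≤ √(Fintype.card ι) * C := by
  rcases isEmpty_or_nonempty ι with hι | ⟨⟨i₀⟩⟩
  · simp [EuclideanSpace.norm_eq]
  have hC : 0 ≤ C := (norm_nonneg _).trans (h i₀)
  calc ‖x‖ = √(∑ i, ‖x i‖ ^ 2) := EuclideanSpace.norm_eq x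
    _ ≤ √(∑ _ : ι, C ^ 2) := by gcongr with i; exact h i
    _ = √(Fintype.card ι) * C := by simp [Real.sqrt_mul, hC]

theorem stmt4 (n : ℕ) (c : Fin (n + 1) → ℝ)
    (ω : ℂ) (hω : ω = Complex.exp (2 * Real.pi * Complex.I / (n + 1)))
    (lam : Fin (n + 1) → ℂ)
    (hlam : ∀ i, lam i = ∑ j : Fin (n + 1), (c j : ℂ) * ω ^ (i.val * j.val))
    (hne : ∀ i, lam i ≠ 0)
    (b : Fin (n + 1) → EuclideanSpace ℝ (Fin (n + 1)))
    (hb : ∀ j i, b j i = c (j - i)) :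
    haveI : WellFoundedLT (Fin (n + 1)) := Finite.to_wellFoundedLT
    (1 / Real.sqrt (n + 1)) *
        (Finset.univ.inf' Finset.univ_nonempty fun i => ‖lam i‖) ≤
      ‖InnerProductSpace.gramSchmidt ℝ b (Fin.last n)‖ := by
  have hprim : IsPrimitiveRoot ω (n + 1) := by
    rw [hω]; exact_mod_cast Complex.isPrimitiveRoot_exp (n + 1) n.succ_ne_zero
  set m := univ.inf' univ_nonempty fun i => ‖lam i‖
  have hm : 0 < m := (lt_inf'_iff _).2 fun i _ => norm_pos_iff.2 (hne i)
  set s := circulantDual ω lam (Fin.last n)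
  -- `s` is real because `c` is, but taking real parts avoids proving it.
  set r : EuclideanSpace ℝ (Fin (n + 1)) := WithLp.toLp 2 fun i => (s i).re
  have hrb : ∀ j, inner ℝ r (b j) = if j = Fin.last n then 1 else 0 := fun j => by
    have := congrArg Complex.re
      (congrFun (circulant_mulVec_circulantDual hprim hlam hne (Fin.last n)) j)
    simpa [r, PiLp.inner_apply, hb, Matrix.mulVec, dotProduct, Pi.single_apply, Complex.re_sum,
      apply_ite Complex.re] using this
  have hr : ‖r‖ ≤ √(n + 1) * m⁻¹ := by
    simpa using EuclideanSpace.norm_le_sqrt_card_mul fun i => (Complex.abs_re_le_norm (s i)).trans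
      (norm_circulantDual_apply_le (hprim.norm'_eq_one n.succ_ne_zero) hm
        (fun t => inf'_le _ (mem_univ t)) _ i)
  have hgs : 1 ≤ ‖r‖ * ‖gramSchmidt ℝ b (Fin.last n)‖ :=
    one_le_norm_mul_norm_gramSchmidt (fun j hj => by simp [hrb, hj.ne]) (by simp [hrb])
  calc 1 / √((n : ℝ) + 1) * m
      ≤ m / √((n : ℝ) + 1) * (‖r‖ * ‖gramSchmidt ℝ b (Fin.last n)‖) := by
        rw [one_div_mul_eq_div]; exact le_mul_of_one_le_right (by positivity) hgs
    _ ≤ m / √((n : ℝ) + 1) * (√((n : ℝ) + 1) * m⁻¹ * ‖gramSchmidt ℝ b (Fin.last n)‖) := by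
        gcongr
    _ = ‖gramSchmidt ℝ b (Fin.last n)‖ := by field_simp
end

section
/- For 0 ≤ j ≤ k-1 < n and ω = e^{2πi/n}, the absolute value of the product ∏_{0≤ℓ≤k-1, ℓ≠j} (ω^{-ℓ} − ω^{-j}) equals n / (2^{n-k} · ∏_{ℓ=k-j}^{n-j-1} sin(πℓ/n)). -/
/-!
Factoring out `ω ^ (-ℓ)`, the factor for `ℓ` has norm `‖1 - ω ^ (ℓ - j)‖`, which depends only on
`ℓ - j` modulo `n`. These residues, for `ℓ < k` with `ℓ ≠ j`, together with `k - j, …, n - j - 1`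
run exactly once through `1, …, n - 1`; and `∏_{m=1}^{n-1} (1 - ω ^ m) = n` is the value at `1` of
`(X ^ n - 1) / (X - 1)`. Finally `‖1 - ω ^ m‖ = 2 sin (π m / n)` for `0 ≤ m ≤ n`.
-/

open Finset Real

open Polynomial in
theorem IsPrimitiveRoot.prod_one_sub_pow_Ico {R : Type*} [CommRing R] [IsDomain R] {ζ : R}
    {n : ℕ} (hζ : IsPrimitiveRoot ζ n) (hn : 0 < n) : ∏ i ∈ Ico 1 n, (1 - ζ ^ i) = n := by
  have h : (X - C 1) * ∏ i ∈ Ico 1 n, (X - C (ζ ^ i)) = (X - C 1) * ∑ i ∈ range n, X ^ i := by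
    rw [C_1, mul_comm _ (∑ _ ∈ _, _), geom_sum_mul, ← C_1, X_pow_sub_C_eq_prod hζ hn (one_pow n),
      range_eq_Ico, prod_eq_prod_Ico_succ_bot hn]
    simp
  simpa [eval_prod, eval_finsetSum] using
    congrArg (eval 1) (mul_left_cancel₀ (X_sub_C_ne_zero 1) h)

theorem Function.Periodic.prod_range_erase_sub_mul_prod_Ico {M : Type*} [CommMonoid M]
    {f : ℤ → M} {n k j : ℕ} (hf : Function.Periodic f n) (hj : j < k) (hkn : k ≤ n) :
    (∏ ℓ ∈ (range k).erase j, f (ℓ - j)) * ∏ m ∈ Ico (k - j) (n - j), f m =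
      ∏ m ∈ Ico 1 n, f m := by
  rw [← prod_sdiff (Ico_subset_Ico (by omega) (by omega) : Ico (k - j) (n - j) ⊆ Ico 1 n)]
  congr 1
  refine prod_nbij' (fun ℓ ↦ if j < ℓ then ℓ - j else ℓ + n - j)
    (fun m ↦ if m < n - j then m + j else m + j - n) ?_ ?_ ?_ ?_ fun ℓ hℓ ↦ ?_
  iterate 4
    (intro x hx; simp only [mem_erase, mem_range, mem_sdiff, mem_Ico] at hx ⊢; split_ifs <;> omega)
  simp only [mem_erase, mem_range] at hℓ
  split_ifs
  · congr 1; omega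
  · rw [← hf]; congr 1; omega

theorem Complex.norm_one_sub_exp_two_pi_I_div_pow {n m : ℕ} (hm : m ≤ n) :
    ‖1 - exp (2 * π * I / n) ^ m‖ = 2 * Real.sin (π * m / n) := by
  have hexp : exp (2 * π * I / n) ^ m = exp (I * ↑(2 * π * m / n)) := by
    rw [← exp_nat_mul]; push_cast; ring_nf
  have hle : π * m / n ≤ π := by
    rw [mul_div_assoc]
    exact mul_le_of_le_one_right pi_pos.le (div_le_one_of_le₀ (by exact_mod_cast hm) n.cast_nonneg)
  rw [hexp, norm_sub_rev, norm_exp_I_mul_ofReal_sub_one, show 2 * π * m / n / 2 = π * m / n by ring,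
    Real.norm_eq_abs,
    abs_of_nonneg (mul_nonneg zero_le_two (sin_nonneg_of_nonneg_of_le_pi (by positivity) hle))]

theorem Real.sin_pi_mul_natCast_div_pos {m n : ℕ} (hm : 0 < m) (hmn : m < n) :
    0 < sin (π * m / n) := by
  have hn : (0 : ℝ) < n := by exact_mod_cast hm.trans hmn
  refine sin_pos_of_pos_of_lt_pi (by positivity) ?_
  rw [div_lt_iff₀ hn]
  exact mul_lt_mul_of_pos_left (by exact_mod_cast hmn) pi_pos

theorem stmt6 (n k j : ℕ) (hkn : k ≤ n) (hj : j < k)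
    (ω : ℂ) (hω : ω = Complex.exp (2 * Real.pi * Complex.I / n)) :
    ‖∏ ℓ ∈ (Finset.range k).erase j, (ω ^ (-(ℓ : ℤ)) - ω ^ (-(j : ℤ)))‖ =
      n / (2 ^ (n - k) * ∏ ℓ ∈ Finset.Ico (k - j) (n - j), Real.sin (Real.pi * ℓ / n)) := by
  have hn : 0 < n := by omega
  have hζ : IsPrimitiveRoot ω n := hω ▸ Complex.isPrimitiveRoot_exp n hn.ne'
  have hω0 : ω ≠ 0 := hζ.ne_zero hn.ne'
  set f : ℤ → ℝ := fun d ↦ ‖1 - ω ^ d‖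
  have hf : Function.Periodic f n := fun d ↦ by
    simp only [f, zpow_add₀ hω0, zpow_natCast, hζ.pow_eq_one, mul_one]
  have hfactor (ℓ : ℕ) : ‖ω ^ (-(ℓ : ℤ)) - ω ^ (-(j : ℤ))‖ = f (ℓ - j) := by
    rw [show ω ^ (-(j : ℤ)) = ω ^ (-(ℓ : ℤ)) * ω ^ ((ℓ : ℤ) - j) by rw [← zpow_add₀ hω0]; ring_nf,
      ← mul_one_sub, norm_mul, norm_zpow, hζ.norm'_eq_one hn.ne', one_zpow, one_mul]
  have hf_sin {m : ℕ} (hm : m ≤ n) : f m = 2 * sin (π * m / n) := by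
    simp only [f, zpow_natCast]
    rw [hω, Complex.norm_one_sub_exp_two_pi_I_div_pow hm]
  have hsin : ∏ m ∈ Ico (k - j) (n - j), f m =
      2 ^ (n - k) * ∏ m ∈ Ico (k - j) (n - j), sin (π * m / n) := by
    rw [prod_congr rfl fun m hm ↦ hf_sin (by simp only [mem_Ico] at hm; omega), prod_mul_distrib,
      prod_const, Nat.card_Ico, show n - j - (k - j) = n - k by omega]
  have hfull : ∏ m ∈ Ico 1 n, f m = n := by
    simp only [f, zpow_natCast, ← norm_prod, hζ.prod_one_sub_pow_Ico hn, Complex.norm_natCast]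
  have hpos : 0 < (2 : ℝ) ^ (n - k) * ∏ m ∈ Ico (k - j) (n - j), sin (π * m / n) :=
    mul_pos (by positivity) (prod_pos fun m hm ↦ by
      simp only [mem_Ico] at hm; exact sin_pi_mul_natCast_div_pos (by omega) (by omega))
  rw [norm_prod, prod_congr rfl fun ℓ _ ↦ hfactor ℓ, eq_div_iff hpos.ne', ← hsin, ← hfull]
  exact hf.prod_range_erase_sub_mul_prod_Ico hj hkn
end

section
/- Let q be a positive integer, B an integer with 0 < 2B+1 < q and gcd(2B+1, q) = 1, and f: ℤ_q → ℝ the normalized indicator of [-B,B]∩ℤ (value 1/√(2B+1) on [-B,B], 0 elsewhere). Then min over y ∈ ℤ_q of |f̂(y)| is at least 1/(q·√(q(2B+1))), where f̂ is the DFT of f over ℤ_q. -/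
/-!
With `ψ = ZMod.stdAddChar`, the sum defining `f̂(y)` is `ψ(-B y)` times the geometric sum
`∑_{j < 2B+1} ω ^ j` in `ω = ψ(y)`, whose modulus is `‖ω ^ (2B+1) - 1‖ / ‖ω - 1‖`. The
denominator is at most `2`. For `y ≠ 0`, coprimality makes `ω ^ (2B+1) = ψ((2B+1) y)` a `q`-th
root of unity `exp (2πi k / q)` with `0 < k < q`, so the numerator is `2 sin (π k / q) ≥ 2 / q`.
-/

open Complex Finset
open scoped Real

theorem Real.one_div_le_sin_pi_mul_div {k q : ℕ} (hk : 0 < k) (hkq : k < q) :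
    1 / (q : ℝ) ≤ Real.sin (π * k / q) := by
  have hq : (0 : ℝ) < q := by exact_mod_cast hk.trans hkq
  -- Jordan's inequality, applied to whichever of `k`, `q - k` is at most `q / 2`
  have of_two_mul_le : ∀ m : ℕ, 0 < m → 2 * m ≤ q → 1 / (q : ℝ) ≤ Real.sin (π * m / q) := by
    intro m hm h2m
    have hm' : (1 : ℝ) ≤ m := by exact_mod_cast hm
    have h2m' : 2 * (m : ℝ) ≤ q := by exact_mod_cast h2m
    calc 1 / (q : ℝ) ≤ 2 / π * (π * m / q) := by
          rw [div_le_iff₀ hq]; field_simp; linarith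
      _ ≤ Real.sin (π * m / q) := by
          refine Real.mul_le_sin (by positivity) ?_
          rw [div_le_div_iff₀ hq two_pos]; nlinarith [pi_pos]
  rcases le_or_gt (2 * k) q with h | h
  · exact of_two_mul_le k hk h
  · have h' := of_two_mul_le (q - k) (by omega) (by omega)
    rwa [Nat.cast_sub hkq.le, mul_sub, sub_div, mul_div_cancel_right₀ _ hq.ne',
      Real.sin_pi_sub] at h'

theorem norm_pow_sub_one_le_two_mul_norm_geom_sum {R : Type*} [NormedRing R] [NormOneClass R]
    {ω : R} (hω : ‖ω‖ ≤ 1) (n : ℕ) : ‖ω ^ n - 1‖ ≤ 2 * ‖∑ j ∈ range n, ω ^ j‖ := by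
  rw [← geom_sum_mul, mul_comm 2]
  refine (norm_mul_le _ _).trans (mul_le_mul_of_nonneg_left ?_ (norm_nonneg _))
  calc ‖ω - 1‖ ≤ ‖ω‖ + ‖(1 : R)‖ := norm_sub_le _ _
    _ ≤ 2 := by rw [norm_one]; linarith

namespace ZMod

variable {q : ℕ} [NeZero q]

theorem two_div_le_norm_stdAddChar_sub_one {z : ZMod q} (hz : z ≠ 0) :
    2 / (q : ℝ) ≤ ‖stdAddChar z - 1‖ := by
  have hψ : stdAddChar z = exp (I * (2 * π * z.val / q : ℝ)) := by
    rw [stdAddChar_apply, toCircle_apply]; push_cast; congr 1; ring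
  have hsin := Real.one_div_le_sin_pi_mul_div ((val_pos).2 hz) z.val_lt
  rw [hψ, norm_exp_I_mul_ofReal_sub_one, Real.norm_eq_abs]
  calc 2 / (q : ℝ) = 2 * (1 / q) := by ring
    _ ≤ 2 * Real.sin (π * z.val / q) := by gcongr
    _ = 2 * Real.sin (2 * π * z.val / q / 2) := by congr 2; ring
    _ ≤ _ := le_abs_self _

theorem one_div_le_norm_geom_sum_stdAddChar {n : ℕ} (hn : 0 < n) (hnq : n.Coprime q)
    (y : ZMod q) : 1 / (q : ℝ) ≤ ‖∑ j ∈ range n, stdAddChar y ^ j‖ := by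
  have hq : (1 : ℝ) ≤ q := by exact_mod_cast NeZero.one_le
  by_cases hy : y = 0
  · have hn' : (1 : ℝ) ≤ n := by exact_mod_cast hn
    simp only [hy, AddChar.map_zero_eq_one, one_pow, sum_const, card_range, nsmul_eq_mul,
      mul_one, Complex.norm_natCast]
    calc 1 / (q : ℝ) ≤ 1 := div_le_one_of_le₀ hq (by positivity)
      _ ≤ n := hn'
  · have hny : (n : ZMod q) * y ≠ 0 :=
      (IsUnit.mul_right_eq_zero ((isUnit_iff_coprime n q).2 hnq)).not.2 hy
    have hpow := two_div_le_norm_stdAddChar_sub_one hny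
    rw [← nsmul_eq_mul, AddChar.map_nsmul_eq_pow] at hpow
    have hgeom := norm_pow_sub_one_le_two_mul_norm_geom_sum (AddChar.norm_apply stdAddChar y).le n
    calc 1 / (q : ℝ) = 2 / q / 2 := by ring
      _ ≤ _ := by linarith

theorem val_le_or_sub_le_val_iff {B : ℕ} (hB : 2 * B < q) (x : ZMod q) :
    x.val ≤ B ∨ q - B ≤ x.val ↔ (x + B).val < 2 * B + 1 := by
  have hx := x.val_lt
  rw [val_add, val_natCast_of_lt (by omega : B < q)]
  rcases lt_or_ge (x.val + B) q with h | h
  · rw [Nat.mod_eq_of_lt h]; omega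
  · rw [Nat.mod_eq_sub_mod h, Nat.mod_eq_of_lt (by omega)]; omega

theorem sum_filter_val_lt {M : Type*} [AddCommMonoid M] {n : ℕ} (hn : n ≤ q) (g : ZMod q → M) :
    ∑ z with z.val < n, g z = ∑ j ∈ range n, g j := by
  refine sum_nbij' val Nat.cast (by simp) ?_ (by simp) ?_ (by simp)
  · intro j hj
    simp only [mem_range, mem_filter, mem_univ, true_and] at hj ⊢
    rw [val_natCast_of_lt (hj.trans_le hn)]; exact hj
  · intro j hj
    rw [val_natCast_of_lt ((mem_range.1 hj).trans_le hn)]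

theorem sum_addChar_filter_val_le_or_sub_le_val {R : Type*} [CommSemiring R] {B : ℕ}
    (hB : 2 * B < q) (ψ : AddChar (ZMod q) R) :
    ∑ x with x.val ≤ B ∨ q - B ≤ x.val, ψ x = ψ (-B) * ∑ j ∈ range (2 * B + 1), ψ 1 ^ j := by
  calc ∑ x with x.val ≤ B ∨ q - B ≤ x.val, ψ x
      = ∑ z with z.val < 2 * B + 1, ψ (z - B) :=
        sum_equiv (Equiv.addRight (B : ZMod q))
          (by simpa only [mem_filter, mem_univ, true_and, Equiv.coe_addRight]
            using val_le_or_sub_le_val_iff hB)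
          (by simp)
    _ = ∑ j ∈ range (2 * B + 1), ψ (j - B) := sum_filter_val_lt (by omega) _
    _ = ψ (-B) * ∑ j ∈ range (2 * B + 1), ψ 1 ^ j := by
        rw [mul_sum]
        refine sum_congr rfl fun j _ ↦ ?_
        rw [sub_eq_neg_add, AddChar.map_add_eq_mul, ← AddChar.map_nsmul_eq_pow, nsmul_one]

theorem cexp_val_mul_val_eq_stdAddChar_mulShift (x y : ZMod q) :
    exp (2 * π * I * (x.val * y.val) / q) = stdAddChar.mulShift y x := by
  have hyx : y * x = ((x.val * y.val : ℕ) : ZMod q) := by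
    push_cast [natCast_zmod_val]; ring
  rw [AddChar.mulShift_apply, stdAddChar_apply, hyx, toCircle_natCast]
  push_cast; rfl

end ZMod

theorem stmt8 (q B : ℕ) [NeZero q] (hB : 2 * B + 1 < q) (hgcd : Nat.gcd (2 * B + 1) q = 1)
    (f : ZMod q → ℝ)
    (hf : ∀ x : ZMod q, f x = if x.val ≤ B ∨ q - B ≤ x.val then 1 / Real.sqrt (2 * B + 1) else 0)
    (Fhat : ZMod q → ℂ)
    (hFhat : ∀ y : ZMod q, Fhat y = (1 / Real.sqrt q : ℝ) * ∑ x : ZMod q,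
      Complex.exp (2 * Real.pi * Complex.I * (x.val * y.val) / q) * (f x : ℂ)) :
    ∀ y : ZMod q, 1 / (q * Real.sqrt (q * (2 * B + 1))) ≤ ‖Fhat y‖ := by
  intro y
  have hsum : ∑ x : ZMod q, exp (2 * π * I * (x.val * y.val) / q) * (f x : ℂ)
      = (1 / Real.sqrt (2 * B + 1) : ℝ) *
        (ZMod.stdAddChar (y * -(B : ZMod q)) * ∑ j ∈ range (2 * B + 1), ZMod.stdAddChar y ^ j) := by
    simp_rw [ZMod.cexp_val_mul_val_eq_stdAddChar_mulShift, hf, apply_ite ofReal, ofReal_zero,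
      mul_ite, mul_zero, ← sum_filter]
    rw [← sum_mul, ZMod.sum_addChar_filter_val_le_or_sub_le_val (by omega), mul_comm]
    simp only [AddChar.mulShift_apply, mul_one]
  have hq : (0 : ℝ) < q := by exact_mod_cast NeZero.pos q
  rw [hFhat, hsum, norm_mul, norm_mul, norm_mul, AddChar.norm_apply, one_mul, norm_real,
    norm_real, Real.norm_of_nonneg (by positivity), Real.norm_of_nonneg (by positivity)]
  calc 1 / (q * Real.sqrt (q * (2 * B + 1)))
      = 1 / Real.sqrt q * (1 / Real.sqrt (2 * B + 1) * (1 / q)) := by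
        rw [Real.sqrt_mul hq.le]; field_simp
    _ ≤ _ := by gcongr; exact ZMod.one_div_le_norm_geom_sum_stdAddChar (by omega) hgcd y
end

section
/- Let q ≥ 2 and β with 1 ≤ 2β+1 ≤ q. Let f: ℤ_q → ℝ be the normalized indicator of [-β,β] (value 1/√(2β+1) on [-β,β]∩ℤ, 0 elsewhere), and for v ∈ ℤ_q let |ψ_v⟩ = QFT_q applied to Σ_x f(x)ω_q^{-xv}|x⟩. Then for every x ∈ ℤ_q, the average over uniform y ∈ ℤ_q of |⟨ψ_y|ψ_x⟩|² is at most 1/(2β+1); equivalently 1 − (1/q)·Σ_{y∈ℤ_q}|⟨ψ_y|ψ_x⟩|² ≥ 1 − 1/(2β+1). -/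
/-!
With `e = ZMod.stdAddChar` we have `ω ^ n = e n`, so `√q · ψ_v t = ∑ₛ f s e(-sv) e(st)`.
Orthogonality of characters turns `⟨ψ_y|ψ_x⟩` into `∑ₛ |f s|² e(-sx) e(sy)`, and Plancherel in
`y` then gives `∑_y |⟨ψ_y|ψ_x⟩|² = q ∑ₛ |f s|⁴ = q · #supp f / (2β+1)²`, while the support
`[-β, β]` of `f` has at most `2β+1` points.
-/

open Finset ZMod ComplexConjugate

namespace ZMod

variable {N : ℕ} [NeZero N]

theorem exp_two_pi_I_div_zpow (k : ℤ) :
    Complex.exp (2 * Real.pi * Complex.I / N) ^ k = stdAddChar (k : ZMod N) := by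
  rw [stdAddChar_coe, ← Complex.exp_int_mul]
  ring_nf

theorem sum_conj_mul_sum_stdAddChar (g h : ZMod N → ℂ) :
    ∑ t, conj (∑ s, g s * stdAddChar (s * t)) * ∑ s, h s * stdAddChar (s * t) =
      N * ∑ s, conj (g s) * h s := by
  have orthogonality : ∀ s s' : ZMod N, ∑ t, conj (stdAddChar (s * t)) * stdAddChar (s' * t) =
      if s' = s then (N : ℂ) else 0 := by
    intro s s'
    calc ∑ t, conj (stdAddChar (s * t)) * stdAddChar (s' * t)
        = ∑ t : ZMod N, stdAddChar (t * (s' - s)) := sum_congr rfl fun t _ => by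
          rw [← AddChar.map_neg_eq_conj, ← AddChar.map_add_eq_mul]; ring_nf
      _ = if s' = s then (N : ℂ) else 0 := by
          rw [AddChar.sum_mulShift _ (isPrimitive_stdAddChar N)]
          simp only [sub_eq_zero, ZMod.card]
          split_ifs <;> simp
  calc ∑ t, conj (∑ s, g s * stdAddChar (s * t)) * ∑ s, h s * stdAddChar (s * t)
      = ∑ s, ∑ s', conj (g s) * h s' *
          ∑ t, conj (stdAddChar (s * t)) * stdAddChar (s' * t) := by
        simp_rw [map_sum, map_mul, sum_mul_sum, mul_sum]
        rw [sum_comm]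
        refine sum_congr rfl fun s _ => ?_
        rw [sum_comm]
        refine sum_congr rfl fun s' _ => sum_congr rfl fun t _ => by ring
    _ = N * ∑ s, conj (g s) * h s := by
        simp_rw [orthogonality, mul_ite, mul_zero, sum_ite_eq', mem_univ, if_true, mul_sum]
        exact sum_congr rfl fun s _ => mul_comm _ _

theorem sum_norm_sq_sum_stdAddChar (g : ZMod N → ℂ) :
    ∑ t, ‖∑ s, g s * stdAddChar (s * t)‖ ^ 2 = N * ∑ s, ‖g s‖ ^ 2 := by
  have h := sum_conj_mul_sum_stdAddChar g g
  simp_rw [Complex.conj_mul'] at h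
  exact_mod_cast h

theorem sum_star_mul_modulated (f : ZMod N → ℂ) (x y : ZMod N) :
    ∑ t, star (((1 / √N : ℝ) : ℂ) * ∑ s, f s * stdAddChar (-(s * y)) * stdAddChar (s * t)) *
        (((1 / √N : ℝ) : ℂ) * ∑ s, f s * stdAddChar (-(s * x)) * stdAddChar (s * t)) =
      ∑ s, ‖f s‖ ^ 2 * stdAddChar (-(s * x)) * stdAddChar (s * y) := by
  have hN : ((1 / √N : ℝ) : ℂ) * ((1 / √N : ℝ) : ℂ) * N = 1 := by
    rw [← Complex.ofReal_mul, ← Complex.ofReal_natCast, ← Complex.ofReal_mul,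
      div_mul_div_comm, one_mul, Real.mul_self_sqrt N.cast_nonneg, one_div_mul_cancel
        (by exact_mod_cast NeZero.ne N), Complex.ofReal_one]
  have plancherel := sum_conj_mul_sum_stdAddChar (fun s => f s * stdAddChar (-(s * y)))
    (fun s => f s * stdAddChar (-(s * x)))
  simp_rw [star_mul', ← starRingEnd_apply, Complex.conj_ofReal, mul_mul_mul_comm _ (conj _),
    ← mul_sum, plancherel, ← mul_assoc, hN, one_mul, map_mul, ← AddChar.map_neg_eq_conj,
    neg_neg]
  exact sum_congr rfl fun s _ => by rw [← Complex.conj_mul']; ring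

theorem sum_norm_sq_sum_modulated (f : ZMod N → ℂ) (x : ZMod N) :
    ∑ y, ‖∑ s, ‖f s‖ ^ 2 * stdAddChar (-(s * x)) * stdAddChar (s * y)‖ ^ 2 =
      N * ∑ s, ‖f s‖ ^ 4 := by
  simp_rw [sum_norm_sq_sum_stdAddChar, norm_mul, AddChar.norm_apply, mul_one, Complex.norm_pow,
    Complex.norm_real, Real.norm_eq_abs, abs_norm, ← pow_mul]

theorem card_filter_val_le_or_le (β : ℕ) :
    #{s : ZMod N | s.val ≤ β ∨ N - β ≤ s.val} ≤ 2 * β + 1 := by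
  have low : #{s : ZMod N | s.val ≤ β} ≤ β + 1 := by
    simpa using card_le_card_of_injOn val (t := range (β + 1))
      (fun s hs => by simp_all) (val_injective N).injOn
  have high : #{s : ZMod N | N - β ≤ s.val} ≤ β := by
    have := card_le_card_of_injOn val (s := {s : ZMod N | N - β ≤ s.val}) (t := Ico (N - β) N)
      (fun s hs => by simp_all [s.val_lt]) (val_injective N).injOn
    simp only [Nat.card_Ico] at this
    omega
  rw [filter_or]
  exact (card_union_le _ _).trans (by omega)

end ZMod

theorem sum_norm_pow_four_le_of_eq_indicator {ι : Type*} [Fintype ι] (p : ι → Prop)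
    [DecidablePred p] {c : ℝ} (hc : 0 < c) (hp : (#{i | p i} : ℝ) ≤ c) (f : ι → ℂ)
    (hf : ∀ i, f i = if p i then ((1 / √c : ℝ) : ℂ) else 0) :
    ∑ i, ‖f i‖ ^ 4 ≤ 1 / c := by
  have hf4 : ∀ i, ‖f i‖ ^ 4 = if p i then 1 / c ^ 2 else 0 := by
    intro i
    rw [hf]
    split_ifs
    · have hc4 : √c ^ 4 = c ^ 2 := by rw [show 4 = 2 * 2 from rfl, pow_mul, Real.sq_sqrt hc.le]
      rw [Complex.norm_real, Real.norm_eq_abs, abs_of_nonneg (by positivity), div_pow, one_pow,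
        hc4]
    · simp
  simp_rw [hf4, ← sum_filter, sum_const, nsmul_eq_mul]
  calc (#{i | p i} : ℝ) * (1 / c ^ 2) ≤ c * (1 / c ^ 2) := by gcongr
    _ = 1 / c := by field_simp

theorem stmt10_general (q β : ℕ) [NeZero q]
    (f : ZMod q → ℂ)
    (hf : ∀ x : ZMod q,
      f x = if x.val ≤ β ∨ q - β ≤ x.val then ((1 / Real.sqrt (2 * β + 1) : ℝ) : ℂ) else 0)
    (ω : ℂ) (hω : ω = Complex.exp (2 * Real.pi * Complex.I / q))
    (ψ : ZMod q → ZMod q → ℂ)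
    (hψ : ∀ v t : ZMod q, ψ v t = (1 / Real.sqrt q : ℝ) *
      ∑ s : ZMod q, ω ^ (s.val * t.val) * (f s * ω ^ (-(s.val * v.val : ℤ)))) :
    ∀ x : ZMod q,
      (1 / (q : ℝ)) * ∑ y : ZMod q,
          ‖∑ t : ZMod q, star (ψ y t) * ψ x t‖ ^ 2 ≤ 1 / (2 * β + 1) := by
  intro x
  have hψ' : ∀ v t, ψ v t = ((1 / √q : ℝ) : ℂ) *
      ∑ s, f s * stdAddChar (-(s * v)) * stdAddChar (s * t) := by
    intro v t
    rw [hψ]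
    refine congrArg _ (sum_congr rfl fun s _ => ?_)
    rw [← zpow_natCast, hω, exp_two_pi_I_div_zpow, exp_two_pi_I_div_zpow]
    push_cast [natCast_zmod_val]
    ring
  calc (1 / (q : ℝ)) * ∑ y, ‖∑ t, star (ψ y t) * ψ x t‖ ^ 2
      = (1 / (q : ℝ)) * ∑ y, ‖∑ s, ‖f s‖ ^ 2 * stdAddChar (-(s * x)) * stdAddChar (s * y)‖ ^ 2 := by
        simp_rw [hψ', sum_star_mul_modulated]
    _ = ∑ s, ‖f s‖ ^ 4 := by
        rw [sum_norm_sq_sum_modulated, ← mul_assoc, one_div_mul_cancel (NeZero.ne _), one_mul]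
    _ ≤ 1 / (2 * β + 1) := sum_norm_pow_four_le_of_eq_indicator _ (by positivity)
        (by exact_mod_cast card_filter_val_le_or_le β) f hf

theorem stmt10 (q β : ℕ) [NeZero q] (hq : 2 ≤ q) (hβ : 2 * β + 1 ≤ q)
    (f : ZMod q → ℂ)
    (hf : ∀ x : ZMod q,
      f x = if x.val ≤ β ∨ q - β ≤ x.val then ((1 / Real.sqrt (2 * β + 1) : ℝ) : ℂ) else 0)
    (ω : ℂ) (hω : ω = Complex.exp (2 * Real.pi * Complex.I / q))
    (ψ : ZMod q → ZMod q → ℂ)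
    (hψ : ∀ v t : ZMod q, ψ v t = (1 / Real.sqrt q : ℝ) *
      ∑ s : ZMod q, ω ^ (s.val * t.val) * (f s * ω ^ (-(s.val * v.val : ℤ)))) :
    ∀ x : ZMod q,
      (1 / (q : ℝ)) * ∑ y : ZMod q,
          ‖∑ t : ZMod q, star (ψ y t) * ψ x t‖ ^ 2 ≤ 1 / (2 * β + 1) :=
  stmt10_general q β f hf ω hω ψ hψ
end

section
/- Let q ≥ 2 be an integer, B an integer with 0 < 2B+1 < q, and y ∈ ℤ_q. Define the q×q complex matrix W whose j-th column (j = 0,...,q-1) is the vector |ψ_{y+j}⟩ = Σ_{e∈ℤ_q} ĝ(e)|y+j+e mod q⟩, where g is the normalized indicator of [-B,B] on ℤ_q and ĝ its DFT. Then the rank of W equals 2B+1. -/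
/-!
With `χ = ZMod.stdAddChar` and `F = (χ (i * j))ᵢⱼ`, the entries of `W` are
`ghat (t - (y + j)) = ∑ₓ χ (t x) · (g x / √q) · χ (-(y + j) x)`, so after reindexing the columns
by `j ↦ -(y + j)` the matrix `W` becomes `F · diag (g / √q) · F`. The matrix `F` is invertible,
since `F Φ = q · 𝓕⁻ Φ`, hence the rank of `W` is the number of points where `g` does not vanish,
namely the `2B + 1` residues of `[-B, B]`.
-/

namespace ZMod

open Finset Matrix

variable {N : ℕ} [NeZero N]

noncomputable def fourierMatrix (N : ℕ) [NeZero N] : Matrix (ZMod N) (ZMod N) ℂ :=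
  of fun i j => stdAddChar (i * j)

lemma fourierMatrix_mulVec (Φ : ZMod N → ℂ) : fourierMatrix N *ᵥ Φ = (N : ℂ) • 𝓕⁻ Φ := by
  ext k
  simp [invDFT_apply, fourierMatrix, mulVec, dotProduct, mul_comm k,
    mul_inv_cancel_left₀ (NeZero.ne (N : ℂ))]

lemma isUnit_det_fourierMatrix : IsUnit (fourierMatrix N).det := by
  rw [← isUnit_iff_isUnit_det, ← mulVec_injective_iff_isUnit]
  intro Φ Ψ h
  simpa [fourierMatrix_mulVec, smul_right_injective _ (NeZero.ne (N : ℂ)) |>.eq_iff] using h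

lemma fourierMatrix_mul_diagonal_mul_fourierMatrix (Φ : ZMod N → ℂ) :
    fourierMatrix N * diagonal Φ * fourierMatrix N =
      of fun t j => ∑ x, stdAddChar ((t + j) * x) * Φ x := by
  ext t j
  rw [mul_apply]
  simp only [of_apply, mul_diagonal, fourierMatrix, add_mul, AddChar.map_add_eq_mul]
  exact sum_congr rfl fun x _ => by rw [mul_comm x j]; ring

lemma rank_fourierMatrix_mul_diagonal_mul_fourierMatrix [DecidableEq ℂ] (Φ : ZMod N → ℂ) :
    (fourierMatrix N * diagonal Φ * fourierMatrix N).rank = Fintype.card {x // Φ x ≠ 0} := by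
  rw [rank_mul_eq_left_of_isUnit_det _ _ isUnit_det_fourierMatrix,
    rank_mul_eq_right_of_isUnit_det _ _ isUnit_det_fourierMatrix, rank_diagonal]

lemma stdAddChar_mul (a x : ZMod N) :
    stdAddChar (a * x) = Complex.exp (2 * Real.pi * Complex.I * (a.val * x.val) / N) := by
  have h := stdAddChar_coe (N := N) ((a.val * x.val : ℕ) : ℤ)
  push_cast at h
  simpa using h

lemma card_val_le_or_sub_le_val {B : ℕ} (hB : 2 * B < N) :
    Fintype.card {x : ZMod N // x.val ≤ B ∨ N - B ≤ x.val} = 2 * B + 1 := by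
  rw [Fintype.card_subtype, ← card_image_of_injective _ (val_injective N)]
  have himage : (univ.filter fun x : ZMod N => x.val ≤ B ∨ N - B ≤ x.val).image val
      = range (B + 1) ∪ Ico (N - B) N := by
    ext n
    simp only [mem_image, mem_filter, mem_univ, true_and, mem_union, mem_range, mem_Ico]
    constructor
    · rintro ⟨x, hx, rfl⟩
      have := x.val_lt
      omega
    · intro hn
      refine ⟨n, ?_, val_cast_of_lt (by omega)⟩
      rw [val_cast_of_lt (by omega)]
      omega
  rw [himage, card_union_of_disjoint, card_range, Nat.card_Ico]
  · omega
  · exact disjoint_left.mpr fun n h₁ h₂ => by simp only [mem_range, mem_Ico] at h₁ h₂; omega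

end ZMod

theorem stmt11_general (q B : ℕ) [NeZero q] (hB : 2 * B + 1 < q) (y : ZMod q)
    (g : ZMod q → ℂ)
    (hg : ∀ x : ZMod q,
      g x = if x.val ≤ B ∨ q - B ≤ x.val then ((1 / Real.sqrt (2 * B + 1) : ℝ) : ℂ) else 0)
    (ghat : ZMod q → ℂ)
    (hghat : ∀ e : ZMod q, ghat e = (1 / Real.sqrt q : ℝ) *
      ∑ x : ZMod q, Complex.exp (2 * Real.pi * Complex.I * (e.val * x.val) / q) * g x)
    (W : Matrix (ZMod q) (ZMod q) ℂ)
    (hW : ∀ t j : ZMod q, W t j = ghat (t - (y + j))) :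
    W.rank = 2 * B + 1 := by
  classical
  set c : ℂ := ((1 / Real.sqrt q : ℝ) : ℂ)
  have hc : c ≠ 0 := by simp [c, NeZero.ne q]
  have hW_factor : W = (ZMod.fourierMatrix q * Matrix.diagonal (fun x => c * g x) *
      ZMod.fourierMatrix q).submatrix (Equiv.refl _) ((Equiv.addLeft y).trans (Equiv.neg _)) := by
    ext t j
    simp only [ZMod.fourierMatrix_mul_diagonal_mul_fourierMatrix, hW, hghat, ZMod.stdAddChar_mul,
      Matrix.submatrix_apply, Matrix.of_apply, Finset.mul_sum, Equiv.trans_apply,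
      Equiv.coe_addLeft, Equiv.neg_apply, Equiv.refl_apply, ← sub_eq_add_neg]
    exact Finset.sum_congr rfl fun x _ => by ring
  have hsupport (x : ZMod q) : c * g x ≠ 0 ↔ x.val ≤ B ∨ q - B ≤ x.val := by
    by_cases hx : x.val ≤ B ∨ q - B ≤ x.val
    · refine iff_of_true ?_ hx
      rw [hg, if_pos hx]
      have : 1 / Real.sqrt (2 * B + 1) ≠ 0 := by positivity
      exact mul_ne_zero hc (Complex.ofReal_ne_zero.mpr this)
    · exact iff_of_false (by rw [hg, if_neg hx, mul_zero]; exact fun h => h rfl) hx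
  rw [hW_factor, Matrix.rank_submatrix, ZMod.rank_fourierMatrix_mul_diagonal_mul_fourierMatrix,
    Fintype.card_congr (Equiv.subtypeEquivRight hsupport),
    ZMod.card_val_le_or_sub_le_val (by omega)]

theorem stmt11 (q B : ℕ) [NeZero q] (hq : 2 ≤ q) (hB : 2 * B + 1 < q) (y : ZMod q)
    (g : ZMod q → ℂ)
    (hg : ∀ x : ZMod q,
      g x = if x.val ≤ B ∨ q - B ≤ x.val then ((1 / Real.sqrt (2 * B + 1) : ℝ) : ℂ) else 0)
    (ghat : ZMod q → ℂ)
    (hghat : ∀ e : ZMod q, ghat e = (1 / Real.sqrt q : ℝ) *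
      ∑ x : ZMod q, Complex.exp (2 * Real.pi * Complex.I * (e.val * x.val) / q) * g x)
    (W : Matrix (ZMod q) (ZMod q) ℂ)
    (hW : ∀ t j : ZMod q, W t j = ghat (t - (y + j))) :
    W.rank = 2 * B + 1 :=
  stmt11_general q B hB y g hg ghat hghat W hW
end

section
/- Let q ≥ 2 be an integer, B with 0 < 2B+1 < q, and let W^T = (|ψ_{y}⟩, ..., |ψ_{y+q-1}⟩) be the circulant matrix of shifted states with amplitude ĝ (the DFT of the normalized indicator of [-B,B]). Then the length of the (2B+1)-st Gram-Schmidt vector of the first 2B+1 columns satisfies ‖ψ̃_{y+2B}‖₂ ≥ q/((2B+1)^{3/2}·2^{q-2B-1}). -/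
/-!
On the Fourier side the columns are a Vandermonde family: with `ψ = ZMod.stdAddChar`,
`S = [-B, B]` and the orthonormal characters `e x = q^{-1/2} ψ(· x)`, one has
`b j = ∑ x ∈ S, d x * z x ^ j • e x` with `d x = ψ(-y x) / √(2B+1)` and distinct nodes
`z x = ψ(-x)`. Writing `w x = ∏ l ∈ S \ {x}, (z x - z l)⁻¹` for the Lagrange nodal weights,
`∑ x ∈ S, w x * z x ^ j` is the coefficient of `X ^ 2B` in the interpolant of `X ^ j`, i.e.
`0` for `j < 2B` and `1` for `j = 2B`. So `u = ∑ x ∈ S, conj (w x / d x) • e x` is orthogonal to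
`b 0, …, b (2B-1)` and has `⟪u, b (2B)⟫ = 1`, whence `1 ≤ ‖u‖ * ‖b̃ (2B)‖`.
Since the nodes are all the `q`-th roots of unity, `∏ l ≠ x, (z x - z l)` is the derivative of
`X ^ q - 1` at `z x`, of modulus `q`; the `q - (2B+1)` factors with `l ∉ S` have modulus at most
`2`, so `|w x| ≤ 2 ^ (q - (2B+1)) / q` and `‖u‖ ≤ (2B+1) 2 ^ (q - (2B+1)) / q`.
-/

open Finset Polynomial

namespace InnerProductSpace

variable {𝕜 E ι : Type*} [RCLike 𝕜] [NormedAddCommGroup E] [InnerProductSpace 𝕜 E]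
  [LinearOrder ι] [LocallyFiniteOrderBot ι] [WellFoundedLT ι]

theorem inner_gramSchmidt_eq_of_forall_lt (f : ι → E) {n : ι} {u : E}
    (hu : ∀ j < n, inner 𝕜 u (f j) = 0) : inner 𝕜 u (gramSchmidt 𝕜 f n) = inner 𝕜 u (f n) := by
  have hgs : ∀ i < n, inner 𝕜 u (gramSchmidt 𝕜 f i) = 0 := by
    intro i hi
    have hle : Submodule.span 𝕜 (f '' Set.Iic i) ≤ LinearMap.ker (innerₛₗ 𝕜 u) := by
      rw [Submodule.span_le]
      rintro _ ⟨j, hj, rfl⟩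
      exact hu j (lt_of_le_of_lt hj hi)
    exact hle (gramSchmidt_mem_span 𝕜 f le_rfl)
  conv_rhs => rw [gramSchmidt_def'' 𝕜 f n]
  rw [inner_add_right, inner_sum, Finset.sum_eq_zero, add_zero]
  intro i hi
  rw [inner_smul_right, hgs i (Finset.mem_Iio.1 hi), mul_zero]

theorem norm_inner_le_norm_mul_norm_gramSchmidt (f : ι → E) {n : ι} {u : E}
    (hu : ∀ j < n, inner 𝕜 u (f j) = 0) : ‖inner 𝕜 u (f n)‖ ≤ ‖u‖ * ‖gramSchmidt 𝕜 f n‖ :=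
  inner_gramSchmidt_eq_of_forall_lt f hu ▸ norm_inner_le_norm u _

end InnerProductSpace

namespace Lagrange

theorem sum_nodalWeight_mul_pow {F ι : Type*} [Field F] [DecidableEq ι] {s : Finset ι}
    {v : ι → F} (hvs : Set.InjOn v s) {j : ℕ} (hj : j < #s) :
    ∑ i ∈ s, nodalWeight s v i * v i ^ j = if j = #s - 1 then 1 else 0 := by
  have hdeg : ((X : F[X]) ^ j).degree < #s := by rw [degree_X_pow]; exact_mod_cast hj
  have h := coeff_eq_sum hvs hdeg
  rw [coeff_X_pow] at h
  convert h.symm using 1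
  · refine Finset.sum_congr rfl fun i _ => ?_
    rw [nodalWeight, prod_inv_distrib, eval_pow, eval_X, div_eq_mul_inv, mul_comm]
  · exact if_congr eq_comm rfl rfl

theorem norm_nodalWeight_le_of_subset {F ι : Type*} [NormedField F] [DecidableEq ι]
    {s t : Finset ι} (hst : s ⊆ t) {v : ι → F} (hvt : Set.InjOn v t) (hv : ∀ i ∈ t, ‖v i‖ ≤ 1)
    {i : ι} (hi : i ∈ s) :
    ‖nodalWeight s v i‖ ≤ 2 ^ #(t \ s) * ‖nodalWeight t v i‖ := by
  have hsplit : t.erase i = s.erase i ∪ (t \ s) := by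
    ext l; simp only [mem_erase, mem_union, mem_sdiff]; grind
  have hdisj : Disjoint (s.erase i) (t \ s) :=
    disjoint_left.2 fun l hl hl' => (mem_sdiff.1 hl').2 (mem_of_mem_erase hl)
  have hfactor : ∀ l ∈ t \ s, ‖v i - v l‖ ≤ 2 := fun l hl =>
    (norm_sub_le _ _).trans (by linarith [hv i (hst hi), hv l (mem_sdiff.1 hl).1])
  have hne : ∀ l ∈ t \ s, v i - v l ≠ 0 := fun l hl h =>
    (mem_sdiff.1 hl).2 (hvt (hst hi) (mem_sdiff.1 hl).1 (sub_eq_zero.1 h) ▸ hi)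
  have hcancel : ∏ l ∈ t \ s, ‖v i - v l‖ * ‖(v i - v l)⁻¹‖ = 1 := prod_eq_one fun l hl => by
    rw [norm_inv, mul_inv_cancel₀ (norm_ne_zero_iff.2 (hne l hl))]
  have hprod : ‖nodalWeight s v i‖ = (∏ l ∈ t \ s, ‖v i - v l‖) * ‖nodalWeight t v i‖ := by
    rw [nodalWeight, nodalWeight, hsplit, prod_union hdisj, norm_mul, norm_prod (t \ s),
      mul_left_comm, ← prod_mul_distrib, hcancel, mul_one]
  rw [hprod]
  gcongr
  calc ∏ l ∈ t \ s, ‖v i - v l‖ ≤ ∏ _l ∈ t \ s, (2 : ℝ) :=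
        prod_le_prod (fun _ _ => norm_nonneg _) hfactor
    _ = 2 ^ #(t \ s) := prod_const 2

theorem nodal_univ_eq_X_pow_card_sub_one {R ι : Type*} [CommRing R] [IsDomain R] [Fintype ι]
    [Nonempty ι] {v : ι → R} (hv : Function.Injective v)
    (hpow : ∀ i, v i ^ Fintype.card ι = 1) :
    nodal univ v = X ^ Fintype.card ι - 1 := by
  rw [← C_1]
  apply eq_of_degree_le_of_eval_index_eq univ hv.injOn
  · rw [degree_nodal, card_univ]
  · rw [degree_nodal, degree_X_pow_sub_C Fintype.card_pos, card_univ]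
  · rw [nodal_monic.leadingCoeff, (monic_X_pow_sub_C 1 Fintype.card_ne_zero).leadingCoeff]
  · intro i hi
    simp [eval_nodal_at_node hi, hpow]

theorem norm_nodalWeight_univ {ι : Type*} [Fintype ι] [Nonempty ι] [DecidableEq ι] {v : ι → ℂ}
    (hv : Function.Injective v) (hpow : ∀ i, v i ^ Fintype.card ι = 1) (i : ι) :
    ‖nodalWeight univ v i‖ = (Fintype.card ι : ℝ)⁻¹ := by
  rw [nodalWeight_eq_eval_derivative_nodal (mem_univ i), nodal_univ_eq_X_pow_card_sub_one hv hpow]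
  simp [derivative_X_pow, Complex.norm_eq_one_of_pow_eq_one (hpow i) Fintype.card_ne_zero]

theorem norm_nodalWeight_le_of_pow_eq_one {ι : Type*} [Fintype ι] [Nonempty ι] [DecidableEq ι]
    {v : ι → ℂ} (hv : Function.Injective v) (hpow : ∀ i, v i ^ Fintype.card ι = 1)
    {s : Finset ι} {i : ι} (hi : i ∈ s) :
    ‖nodalWeight s v i‖ ≤ 2 ^ (Fintype.card ι - #s) / Fintype.card ι := by
  have hv1 : ∀ j ∈ univ, ‖v j‖ ≤ 1 := fun j _ =>
    (Complex.norm_eq_one_of_pow_eq_one (hpow j) Fintype.card_ne_zero).le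
  calc ‖nodalWeight s v i‖ ≤ 2 ^ #(univ \ s) * ‖nodalWeight univ v i‖ :=
        norm_nodalWeight_le_of_subset (subset_univ s) hv.injOn hv1 hi
    _ = 2 ^ (Fintype.card ι - #s) / Fintype.card ι := by
        rw [norm_nodalWeight_univ hv hpow, card_univ_sdiff, div_eq_mul_inv]

end Lagrange

section Vandermonde

variable {𝕜 E κ : Type*} [RCLike 𝕜] [NormedAddCommGroup E] [InnerProductSpace 𝕜 E]

theorem Orthonormal.norm_sum_smul_le {e : κ → E} (he : Orthonormal 𝕜 e) (s : Finset κ)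
    {l : κ → 𝕜} {C : ℝ} (hl : ∀ i ∈ s, ‖l i‖ ≤ C) :
    ‖∑ i ∈ s, l i • e i‖ ≤ √(#s) * C := by
  have hsq : ‖∑ i ∈ s, l i • e i‖ ^ 2 = ∑ i ∈ s, ‖l i‖ ^ 2 := by
    have h := he.inner_sum l l s
    rw [inner_self_eq_norm_sq_to_K] at h
    simp only [RCLike.conj_mul] at h
    exact_mod_cast h
  rcases s.eq_empty_or_nonempty with rfl | ⟨i, hi⟩
  · simp
  have hC : 0 ≤ C := (norm_nonneg _).trans (hl i hi)
  rw [← Real.sqrt_sq (norm_nonneg _), ← Real.sqrt_sq hC, ← Real.sqrt_mul (Nat.cast_nonneg _), hsq]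
  gcongr
  calc ∑ i ∈ s, ‖l i‖ ^ 2 ≤ ∑ _i ∈ s, C ^ 2 :=
        sum_le_sum fun i hi => pow_le_pow_left₀ (norm_nonneg _) (hl i hi) 2
    _ = #s * C ^ 2 := by rw [sum_const, nsmul_eq_mul]

open InnerProductSpace Lagrange in
theorem one_le_mul_norm_gramSchmidt_last_of_vandermonde {e : κ → E} (he : Orthonormal 𝕜 e)
    [DecidableEq κ] {s : Finset κ} {n : ℕ} (hs : #s = n + 1) {z d : κ → 𝕜}
    (hz : Set.InjOn z s) {C : ℝ} (hC : ∀ x ∈ s, ‖nodalWeight s z x‖ ≤ C * ‖d x‖)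
    (f : Fin (n + 1) → E) (hf : ∀ j, f j = ∑ x ∈ s, (d x * z x ^ (j : ℕ)) • e x) :
    1 ≤ √(n + 1) * C * ‖gramSchmidt 𝕜 f (Fin.last n)‖ := by
  have hd : ∀ x ∈ s, d x ≠ 0 ∧ ‖nodalWeight s z x / d x‖ ≤ C := by
    intro x hx
    have hdx : d x ≠ 0 := fun h => by
      have := hC x hx
      rw [h, norm_zero, mul_zero] at this
      exact nodalWeight_ne_zero hz hx (norm_le_zero_iff.1 this)
    refine ⟨hdx, ?_⟩
    rw [norm_div, div_le_iff₀ (norm_pos_iff.2 hdx)]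
    exact hC x hx
  set u := ∑ x ∈ s, (starRingEnd 𝕜) (nodalWeight s z x / d x) • e x
  have hinner : ∀ j : Fin (n + 1), inner 𝕜 u (f j) = if (j : ℕ) = n then 1 else 0 := by
    intro j
    have hlag := sum_nodalWeight_mul_pow hz (by rw [hs]; exact j.isLt)
    rw [hs, Nat.add_sub_cancel] at hlag
    rw [hf, he.inner_sum, ← hlag]
    refine sum_congr rfl fun x hx => ?_
    rw [RCLike.conj_conj, ← mul_assoc, div_mul_cancel₀ _ (hd x hx).1]
  have hu : ‖u‖ ≤ √(n + 1) * C := by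
    have := he.norm_sum_smul_le s (l := fun x => (starRingEnd 𝕜) (nodalWeight s z x / d x))
      (C := C) fun x hx => by rw [RCLike.norm_conj]; exact (hd x hx).2
    exact_mod_cast hs ▸ this
  calc (1 : ℝ) = ‖inner 𝕜 u (f (Fin.last n))‖ := by simp [hinner]
    _ ≤ ‖u‖ * ‖gramSchmidt 𝕜 f (Fin.last n)‖ :=
        norm_inner_le_norm_mul_norm_gramSchmidt f fun j hj => by
          rw [hinner]
          exact if_neg (Fin.lt_def.1 hj).ne
    _ ≤ √(n + 1) * C * ‖gramSchmidt 𝕜 f (Fin.last n)‖ := by gcongr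

end Vandermonde

namespace ZMod

variable {N : ℕ} [NeZero N]

theorem card_filter_val (p : ℕ → Prop) [DecidablePred p] :
    #{x : ZMod N | p x.val} = #{n ∈ range N | p n} := by
  have hrange : univ.map ⟨val, val_injective N⟩ = range N := by
    ext n
    simp only [mem_map, mem_univ, true_and, Function.Embedding.coeFn_mk, mem_range]
    exact ⟨fun ⟨x, hx⟩ => hx ▸ x.val_lt, fun h => ⟨n, val_cast_of_lt h⟩⟩
  rw [← hrange, filter_map, card_map]
  rfl

theorem card_filter_val_le_or_le_s12 {B : ℕ} (hB : 2 * B + 1 ≤ N) :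
    #{x : ZMod N | x.val ≤ B ∨ N - B ≤ x.val} = 2 * B + 1 := by
  have hsplit : {n ∈ range N | n ≤ B ∨ N - B ≤ n} = range (B + 1) ∪ Ico (N - B) N := by
    ext n; simp only [mem_filter, mem_range, mem_union, mem_Ico]; omega
  have hdisj : Disjoint (range (B + 1)) (Ico (N - B) N) :=
    disjoint_left.2 fun n h1 h2 => by simp only [mem_range, mem_Ico] at h1 h2; omega
  rw [card_filter_val (fun n => n ≤ B ∨ N - B ≤ n), hsplit, card_union_of_disjoint hdisj,
    card_range, Nat.card_Ico]
  omega

theorem cexp_two_pi_I_val_mul_val (a c : ZMod N) :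
    Complex.exp (2 * Real.pi * Complex.I * (a.val * c.val) / N) = stdAddChar (a * c) := by
  have h : a * c = ((a.val * c.val : ℕ) : ZMod N) := by simp
  rw [h, stdAddChar_apply, toCircle_natCast]
  push_cast
  rfl

noncomputable def stdCharVec (x : ZMod N) : EuclideanSpace ℂ (ZMod N) :=
  WithLp.toLp 2 fun t => ((√N : ℝ) : ℂ)⁻¹ * stdAddChar (t * x)

theorem orthonormal_stdCharVec : Orthonormal ℂ (stdCharVec (N := N)) := by
  rw [orthonormal_iff_ite]
  intro x x'
  have hN : ((√N : ℝ) : ℂ) ^ 2 = N := by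
    rw [← Complex.ofReal_pow, Real.sq_sqrt (Nat.cast_nonneg _)]; simp
  have hN0 : (N : ℂ) ≠ 0 := Nat.cast_ne_zero.2 (NeZero.ne N)
  have hterm : ∀ t : ZMod N, (starRingEnd ℂ) (((√N : ℝ) : ℂ)⁻¹ * stdAddChar (t * x)) *
      (((√N : ℝ) : ℂ)⁻¹ * stdAddChar (t * x')) = (N : ℂ)⁻¹ * stdAddChar (t * (x' - x)) := by
    intro t
    rw [map_mul, map_inv₀, Complex.conj_ofReal, ← AddChar.map_neg_eq_conj, mul_mul_mul_comm,
      ← AddChar.map_add_eq_mul, ← mul_inv, ← sq, hN]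
    ring_nf
  simp only [stdCharVec, PiLp.inner_apply, RCLike.inner_apply', hterm, ← mul_sum,
    AddChar.sum_mulShift _ (isPrimitive_stdAddChar N), sub_eq_zero, ZMod.card]
  by_cases h : x = x'
  · simp [h, hN0]
  · simp [h, Ne.symm h]

theorem shift_sum_stdAddChar_eq_sum_stdCharVec (S : Finset (ZMod N)) (c : ℂ) (y : ZMod N)
    (j : ℕ) :
    (WithLp.toLp 2 fun t =>
      ((√N : ℝ) : ℂ)⁻¹ * ∑ x ∈ S, stdAddChar ((t - (y + (j : ZMod N))) * x) * c :
        EuclideanSpace ℂ (ZMod N)) =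
      ∑ x ∈ S, (c * stdAddChar (-(y * x)) * stdAddChar (-x) ^ j) • stdCharVec x := by
  ext t
  simp only [WithLp.ofLp_sum, WithLp.ofLp_smul, Finset.sum_apply, Pi.smul_apply, stdCharVec,
    smul_eq_mul, mul_sum]
  refine sum_congr rfl fun x _ => ?_
  have h : (t - (y + j)) * x = -(y * x) + j • -x + t * x := by rw [nsmul_eq_mul]; ring
  rw [← AddChar.map_nsmul_eq_pow, h, AddChar.map_add_eq_mul, AddChar.map_add_eq_mul]
  ring

open Lagrange InnerProductSpace in
theorem mul_norm_le_norm_gramSchmidt_last_of_shift (S : Finset (ZMod N)) {n : ℕ}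
    (hS : #S = n + 1) (y : ZMod N) (c : ℂ) (f : Fin (n + 1) → EuclideanSpace ℂ (ZMod N))
    (hf : ∀ j : Fin (n + 1), f j = WithLp.toLp 2 fun t =>
      ((√N : ℝ) : ℂ)⁻¹ * ∑ x ∈ S, stdAddChar ((t - (y + ((j : ℕ) : ZMod N))) * x) * c) :
    N * ‖c‖ ≤ √(n + 1) * 2 ^ (N - (n + 1)) * ‖gramSchmidt ℂ f (Fin.last n)‖ := by
  rcases eq_or_ne c 0 with rfl | hc
  · simp only [norm_zero, mul_zero]; positivity
  set z : ZMod N → ℂ := fun x => stdAddChar (-x)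
  set d : ZMod N → ℂ := fun x => c * stdAddChar (-(y * x))
  have hz : Function.Injective z := fun x x' h => neg_inj.1 (injective_stdAddChar h)
  have hzpow : ∀ x, z x ^ Fintype.card (ZMod N) = 1 := fun x => by
    rw [ZMod.card, ← AddChar.map_nsmul_eq_pow, nsmul_eq_mul, natCast_self, zero_mul,
      AddChar.map_zero_eq_one]
  have hNc : 0 < N * ‖c‖ := mul_pos (Nat.cast_pos.2 (NeZero.pos N)) (norm_pos_iff.2 hc)
  have hw : ∀ x ∈ S, ‖nodalWeight S z x‖ ≤ 2 ^ (N - (n + 1)) / (N * ‖c‖) * ‖d x‖ := by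
    intro x hx
    have hd : ‖d x‖ = ‖c‖ := by simp [d, stdAddChar_apply, Circle.norm_coe]
    have := norm_nodalWeight_le_of_pow_eq_one hz hzpow hx
    rw [ZMod.card, hS] at this
    rw [hd]
    convert this using 1
    field_simp
  have key := one_le_mul_norm_gramSchmidt_last_of_vandermonde orthonormal_stdCharVec hS
    hz.injOn hw f fun j => (hf j).trans (shift_sum_stdAddChar_eq_sum_stdCharVec S c y j)
  rw [mul_div_assoc', div_mul_eq_mul_div, le_div_iff₀ hNc, one_mul] at key
  exact key

end ZMod

theorem stmt12_general (q B : ℕ) [NeZero q] (hB : 2 * B + 1 < q) (y : ZMod q)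
    (g : ZMod q → ℂ)
    (hg : ∀ x : ZMod q,
      g x = if x.val ≤ B ∨ q - B ≤ x.val then ((1 / Real.sqrt (2 * B + 1) : ℝ) : ℂ) else 0)
    (ghat : ZMod q → ℂ)
    (hghat : ∀ e : ZMod q, ghat e = (1 / Real.sqrt q : ℝ) *
      ∑ x : ZMod q, Complex.exp (2 * Real.pi * Complex.I * (e.val * x.val) / q) * g x)
    (b : Fin (2 * B + 1) → EuclideanSpace ℂ (ZMod q))
    (hb : ∀ (j : Fin (2 * B + 1)) (t : ZMod q), b j t = ghat (t - (y + (j.val : ZMod q)))) :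
    haveI : WellFoundedLT (Fin (2 * B + 1)) := Finite.to_wellFoundedLT
    (q : ℝ) / (Real.sqrt (((2 * B + 1 : ℕ) : ℝ) ^ 3) * 2 ^ (q - (2 * B + 1))) ≤
      ‖InnerProductSpace.gramSchmidt ℂ b (Fin.last (2 * B))‖ := by
  set S : Finset (ZMod q) := {x | x.val ≤ B ∨ q - B ≤ x.val}
  set k : ℝ := 2 * B + 1
  have hb' : ∀ j : Fin (2 * B + 1), b j = WithLp.toLp 2 fun t => ((√q : ℝ) : ℂ)⁻¹ *
      ∑ x ∈ S, ZMod.stdAddChar ((t - (y + ((j : ℕ) : ZMod q))) * x) * ((1 / √k : ℝ) : ℂ) := by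
    intro j
    ext t
    simp only [hb, hghat, hg, ZMod.cexp_two_pi_I_val_mul_val, mul_ite, mul_zero, ← sum_filter,
      one_div, Complex.ofReal_inv, S, k]
  have key := ZMod.mul_norm_le_norm_gramSchmidt_last_of_shift S
    (ZMod.card_filter_val_le_or_le_s12 hB.le) y _ b hb'
  set G := ‖InnerProductSpace.gramSchmidt ℂ b (Fin.last (2 * B))‖
  have hk : 0 < √k := by positivity
  have hk1 : 1 ≤ √k := Real.one_le_sqrt.2 (by simp [k])
  have hk3 : √(((2 * B + 1 : ℕ) : ℝ) ^ 3) = √k * √k * √k := by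
    rw [pow_succ, Real.sqrt_mul' _ (by positivity), Real.sqrt_sq (by positivity)]
    push_cast
    rw [Real.mul_self_sqrt (by positivity)]
  replace key : q ≤ √k * √k * 2 ^ (q - (2 * B + 1)) * G := by
    simp only [Complex.norm_real, Real.norm_eq_abs, abs_of_pos (one_div_pos.2 hk)] at key
    push_cast at key
    rwa [← div_eq_mul_one_div, div_le_iff₀ hk, mul_comm _ √k, ← mul_assoc, ← mul_assoc] at key
  rw [div_le_iff₀ (by positivity), hk3]
  nlinarith [show 0 ≤ G from norm_nonneg _,
    pow_pos (two_pos : (0 : ℝ) < 2) (q - (2 * B + 1))]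

theorem stmt12 (q B : ℕ) [NeZero q] (hq : 2 ≤ q) (hB : 2 * B + 1 < q) (y : ZMod q)
    (g : ZMod q → ℂ)
    (hg : ∀ x : ZMod q,
      g x = if x.val ≤ B ∨ q - B ≤ x.val then ((1 / Real.sqrt (2 * B + 1) : ℝ) : ℂ) else 0)
    (ghat : ZMod q → ℂ)
    (hghat : ∀ e : ZMod q, ghat e = (1 / Real.sqrt q : ℝ) *
      ∑ x : ZMod q, Complex.exp (2 * Real.pi * Complex.I * (e.val * x.val) / q) * g x)
    (b : Fin (2 * B + 1) → EuclideanSpace ℂ (ZMod q))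
    (hb : ∀ (j : Fin (2 * B + 1)) (t : ZMod q), b j t = ghat (t - (y + (j.val : ZMod q)))) :
    haveI : WellFoundedLT (Fin (2 * B + 1)) := Finite.to_wellFoundedLT
    (q : ℝ) / (Real.sqrt (((2 * B + 1 : ℕ) : ℝ) ^ 3) * 2 ^ (q - (2 * B + 1))) ≤
      ‖InnerProductSpace.gramSchmidt ℂ b (Fin.last (2 * B))‖ :=
  stmt12_general q B hB y g hg ghat hghat b hb
end

section
/- Let q ≥ 2, and let F: ℤ_q^m → ℂ factor as F(x) = ∏_{i=1}^m f(x_i). Let A ∈ ℤ_q^{n×m}. Then applying QFT_q^m (the m-fold QFT over ℤ_q) to the state Σ_{u∈ℤ_q^n} Σ_{e∈ℤ_q^m} F̂(e)|u^T A + e mod q⟩ yields the state proportional to Σ_{z∈ℤ_q^m: Az≡0 mod q} F(z)|z⟩, where F̂(e) = ∏_i f̂(e_i) and f̂ is the DFT of f over ℤ_q. -/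
lemma zpow_congr_mod {q : ℕ} [NeZero q] {ω : ℂ} (hprim : IsPrimitiveRoot ω q)
    (k l : ℤ) (h : (k : ZMod q) = l) : ω ^ k = ω ^ l := by
  have hne : ω ≠ 0 := hprim.ne_zero (NeZero.ne q)
  have hdvd : (q : ℤ) ∣ k - l := by
    rwa [← ZMod.intCast_zmod_eq_zero_iff_dvd, Int.cast_sub, sub_eq_zero]
  obtain ⟨t, ht⟩ := hdvd
  have hk : k = l + q * t := by linarith
  rw [hk, zpow_add₀ hne, zpow_mul, zpow_natCast, hprim.pow_eq_one, one_zpow, mul_one]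

noncomputable def chi {q : ℕ} (ω : ℂ) (a : ZMod q) : ℂ := ω ^ (a.val : ℤ)

lemma chi_add {q : ℕ} [NeZero q] {ω : ℂ} (hprim : IsPrimitiveRoot ω q) (a b : ZMod q) :
    chi ω (a + b) = chi ω a * chi ω b := by
  have h : (((a + b).val : ℤ) : ZMod q) = ((a.val : ℤ) + (b.val : ℤ) : ℤ) := by
    push_cast
    simp [ZMod.natCast_val, ZMod.cast_id]
  rw [chi, zpow_congr_mod hprim _ _ h, zpow_add₀ (hprim.ne_zero (NeZero.ne q))]
  rfl

lemma chi_sum {q : ℕ} [NeZero q] {ω : ℂ} (hprim : IsPrimitiveRoot ω q) {ι : Type*}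
    (s : Finset ι) (g : ι → ZMod q) :
    chi ω (∑ i ∈ s, g i) = ∏ i ∈ s, chi ω (g i) := by
  classical
  induction s using Finset.cons_induction with
  | empty => simp [chi]
  | cons i s hi ih => rw [Finset.sum_cons, Finset.prod_cons, chi_add hprim, ih]

lemma sum_val_eq {q : ℕ} [NeZero q] (g : ℕ → ℂ) :
    ∑ x : ZMod q, g x.val = ∑ j ∈ Finset.range q, g j := by
  refine Finset.sum_nbij' (fun x => x.val) (fun j => (j : ZMod q)) ?_ ?_ ?_ ?_ ?_ <;>
    simp +contextual [ZMod.val_lt, ZMod.val_cast_of_lt, ZMod.natCast_val, ZMod.cast_id,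
      Finset.mem_range, Nat.mod_eq_of_lt]

lemma orth {q : ℕ} [NeZero q] {ω : ℂ} (hprim : IsPrimitiveRoot ω q) (c : ZMod q) :
    ∑ x : ZMod q, chi ω (c * x) = if c = 0 then (q : ℂ) else 0 := by
  split_ifs with h
  · subst h; simp [chi, ZMod.card]
  · have hval : ∀ x : ZMod q, chi ω (c * x) = (ω ^ c.val) ^ x.val := by
      intro x
      rw [chi, ← pow_mul, ← zpow_natCast ω (c.val * x.val)]
      apply zpow_congr_mod hprim
      push_cast
      simp [ZMod.natCast_val, ZMod.cast_id]
    simp only [hval]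
    rw [sum_val_eq]
    have hr1 : ω ^ c.val ≠ 1 := by
      intro hr
      have := (hprim.pow_eq_one_iff_dvd c.val).mp hr
      have h1 : c.val ≠ 0 := by simpa [ZMod.val_eq_zero] using h
      have h2 : c.val < q := ZMod.val_lt c
      exact absurd (Nat.le_of_dvd (Nat.pos_of_ne_zero h1) this) (by omega)
    rw [geom_sum_eq hr1]
    have hq1 : (ω ^ c.val) ^ q = 1 := by
      rw [← pow_mul, mul_comm, pow_mul, hprim.pow_eq_one, one_pow]
    simp [hq1]

lemma chi_mul_eq {q : ℕ} [NeZero q] {ω : ℂ} (hprim : IsPrimitiveRoot ω q) (a b : ZMod q) :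
    ω ^ (a.val * b.val) = chi ω (a * b) := by
  rw [chi, ← zpow_natCast]
  apply zpow_congr_mod hprim
  push_cast
  simp [ZMod.natCast_val, ZMod.cast_id]

lemma chi_neg_eq {q : ℕ} [NeZero q] {ω : ℂ} (hprim : IsPrimitiveRoot ω q) (a b : ZMod q) :
    ω ^ (-(a.val * b.val : ℤ)) = chi ω (a * (-b)) := by
  rw [chi]
  apply zpow_congr_mod hprim
  push_cast
  simp [ZMod.natCast_val, ZMod.cast_id]


lemma sum_chi_fhat {q : ℕ} [NeZero q] {ω : ℂ} (hprim : IsPrimitiveRoot ω q)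
    (f fhat : ZMod q → ℂ)
    (hfhat : ∀ e : ZMod q, fhat e = (1 / Real.sqrt q : ℝ) *
      ∑ x : ZMod q, ω ^ (-(e.val * x.val : ℤ)) * f x) (t : ZMod q) :
    ∑ e : ZMod q, chi ω (e * t) * fhat e = (Real.sqrt q : ℂ) * f t := by
  have hqpos : (0 : ℝ) < q := by
    exact_mod_cast Nat.pos_of_ne_zero (NeZero.ne q)
  have hsq : (Real.sqrt q : ℂ) * (Real.sqrt q : ℂ) = (q : ℂ) := by
    rw [← Complex.ofReal_mul, Real.mul_self_sqrt hqpos.le]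
    norm_num
  have hsqne : (Real.sqrt q : ℂ) ≠ 0 := by
    simpa using (Real.sqrt_ne_zero hqpos.le).mpr (ne_of_gt hqpos)
  calc ∑ e : ZMod q, chi ω (e * t) * fhat e
      = ∑ e : ZMod q, ∑ x : ZMod q,
          ((1 / Real.sqrt q : ℝ) : ℂ) * (chi ω ((t - x) * e) * f x) := by
        refine Finset.sum_congr rfl fun e _ => ?_
        rw [hfhat e, Finset.mul_sum, Finset.mul_sum]
        refine Finset.sum_congr rfl fun x _ => ?_
        rw [chi_neg_eq hprim]
        have h1 : chi ω (e * t) * chi ω (e * (-x)) = chi ω ((t - x) * e) := by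
          rw [← chi_add hprim]
          congr 1
          ring
        calc chi ω (e * t) * (((1 / Real.sqrt q : ℝ) : ℂ) * (chi ω (e * (-x)) * f x))
            = ((1 / Real.sqrt q : ℝ) : ℂ) * ((chi ω (e * t) * chi ω (e * (-x))) * f x) := by
              ring
          _ = ((1 / Real.sqrt q : ℝ) : ℂ) * (chi ω ((t - x) * e) * f x) := by rw [h1]
    _ = ∑ x : ZMod q, ((1 / Real.sqrt q : ℝ) : ℂ) * ((∑ e : ZMod q, chi ω ((t - x) * e)) * f x) := by
        rw [Finset.sum_comm]
        refine Finset.sum_congr rfl fun x _ => ?_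
        rw [Finset.sum_mul, Finset.mul_sum]
    _ = ∑ x : ZMod q, (if x = t then ((1 / Real.sqrt q : ℝ) : ℂ) * ((q : ℂ) * f x) else 0) := by
        refine Finset.sum_congr rfl fun x _ => ?_
        rw [orth hprim]
        by_cases hx : x = t
        · simp [hx]
        · rw [if_neg (fun h => hx (by rwa [sub_eq_zero, eq_comm] at h)), if_neg hx]
          ring
    _ = ((1 / Real.sqrt q : ℝ) : ℂ) * ((q : ℂ) * f t) := by
        rw [Finset.sum_ite_eq' Finset.univ t]
        simp
    _ = (Real.sqrt q : ℂ) * f t := by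
        rw [← hsq]
        push_cast
        field_simp

theorem stmt13 (q n m : ℕ) [NeZero q] (hq : 2 ≤ q)
    (ω : ℂ) (hω : ω = Complex.exp (2 * Real.pi * Complex.I / q))
    (f fhat : ZMod q → ℂ)
    (hfhat : ∀ e : ZMod q, fhat e = (1 / Real.sqrt q : ℝ) *
      ∑ x : ZMod q, ω ^ (-(e.val * x.val : ℤ)) * f x)
    (A : Matrix (Fin n) (Fin m) (ZMod q)) :
    ∃ c : ℂ, c ≠ 0 ∧ ∀ z : Fin m → ZMod q,
      (∑ w : Fin m → ZMod q,
          (∏ i, (1 / Real.sqrt q : ℝ) * ω ^ ((w i).val * (z i).val)) *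
            ∑ u : Fin n → ZMod q, ∏ i, fhat (w i - ∑ r, u r * A r i)) =
        c * (if A.mulVec z = 0 then ∏ i, f (z i) else 0) := by
  have hprim : IsPrimitiveRoot ω q := by
    rw [hω]; exact Complex.isPrimitiveRoot_exp q (NeZero.ne q)
  have hqpos : (0 : ℝ) < q := by exact_mod_cast Nat.pos_of_ne_zero (NeZero.ne q)
  have hsqR : ((Real.sqrt q : ℝ) : ℂ) * ((Real.sqrt q : ℝ) : ℂ) = (q : ℂ) := by
    rw [← Complex.ofReal_mul, Real.mul_self_sqrt hqpos.le]; norm_num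
  have hsqne : ((Real.sqrt q : ℝ) : ℂ) ≠ 0 := by
    simpa using (Real.sqrt_ne_zero hqpos.le).mpr (ne_of_gt hqpos)
  have hc : ((1 / Real.sqrt q : ℝ) : ℂ) = ((Real.sqrt q : ℝ) : ℂ)⁻¹ := by
    push_cast; rw [one_div]
  refine ⟨(q : ℂ) ^ n, pow_ne_zero _ (Nat.cast_ne_zero.mpr (NeZero.ne q)), fun z => ?_⟩
  set sq : ℂ := ((Real.sqrt q : ℝ) : ℂ) with hsqdef
  set v : (Fin n → ZMod q) → Fin m → ZMod q := fun u i => ∑ r, u r * A r i with hv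
  set b : Fin n → ZMod q := A.mulVec z with hb
  -- per-coordinate inverse DFT
  have hdft : ∀ t : ZMod q, ∑ x : ZMod q, chi ω (x * t) * fhat x = sq * f t :=
    sum_chi_fhat hprim f fhat hfhat
  -- character-sum over u
  have hvz : ∀ u : Fin n → ZMod q,
      (∏ i, chi ω (v u i * z i)) = ∏ r, chi ω (u r * b r) := by
    intro u
    rw [← chi_sum hprim, ← chi_sum hprim]
    congr 1
    calc ∑ i, v u i * z i = ∑ i, ∑ r, u r * (A r i * z i) := by
          refine Finset.sum_congr rfl fun i _ => ?_
          rw [hv, Finset.sum_mul]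
          exact Finset.sum_congr rfl fun r _ => by ring
      _ = ∑ r, ∑ i, u r * (A r i * z i) := Finset.sum_comm
      _ = ∑ r, u r * b r := by
          refine Finset.sum_congr rfl fun r _ => ?_
          rw [hb]
          simp [Matrix.mulVec, dotProduct, Finset.mul_sum]
  have hub : ∑ u : Fin n → ZMod q, ∏ r, chi ω (u r * b r)
      = if b = 0 then (q : ℂ) ^ n else 0 := by
    rw [← Fintype.piFinset_univ, ← Finset.prod_univ_sum (fun _ => Finset.univ)
      (fun r x => chi ω (x * b r))]
    have : ∀ r : Fin n, ∑ x : ZMod q, chi ω (x * b r) = if b r = 0 then (q : ℂ) else 0 := by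
      intro r
      rw [← orth hprim (b r)]
      exact Finset.sum_congr rfl fun x _ => by rw [mul_comm]
    simp only [this]
    by_cases hb0 : b = 0
    · simp [hb0]
    · obtain ⟨r, hr⟩ := Function.ne_iff.mp hb0
      rw [if_neg hb0]
      exact Finset.prod_eq_zero (Finset.mem_univ r) (by rw [if_neg (by simpa using hr)])
  calc (∑ w : Fin m → ZMod q,
          (∏ i, (1 / Real.sqrt q : ℝ) * ω ^ ((w i).val * (z i).val)) *
            ∑ u : Fin n → ZMod q, ∏ i, fhat (w i - v u i))
      = ∑ w : Fin m → ZMod q, ∑ u : Fin n → ZMod q,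
          (sq⁻¹ ^ m * ∏ i, chi ω (w i * z i)) * ∏ i, fhat (w i - v u i) := by
        refine Finset.sum_congr rfl fun w _ => ?_
        rw [Finset.mul_sum]
        refine Finset.sum_congr rfl fun u _ => ?_
        congr 1
        rw [Finset.prod_mul_distrib, Finset.prod_const, Finset.card_univ, Fintype.card_fin, hc]
        congr 1
        exact Finset.prod_congr rfl fun i _ => chi_mul_eq hprim _ _
    _ = ∑ u : Fin n → ZMod q, ∑ e : Fin m → ZMod q,
          (sq⁻¹ ^ m * ∏ i, chi ω ((e i + v u i) * z i)) * ∏ i, fhat (e i) := by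
        rw [Finset.sum_comm]
        refine Finset.sum_congr rfl fun u _ => ?_
        rw [← Equiv.sum_comp (Equiv.addRight (v u))
          (fun w => (sq⁻¹ ^ m * ∏ i, chi ω (w i * z i)) * ∏ i, fhat (w i - v u i))]
        refine Finset.sum_congr rfl fun e _ => ?_
        simp [Pi.add_apply]
    _ = ∑ u : Fin n → ZMod q, (∏ i, chi ω (v u i * z i)) *
          (sq⁻¹ ^ m * ∑ e : Fin m → ZMod q, ∏ i, (chi ω (e i * z i) * fhat (e i))) := by
        refine Finset.sum_congr rfl fun u _ => ?_
        rw [Finset.mul_sum, Finset.mul_sum]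
        refine Finset.sum_congr rfl fun e _ => ?_
        have h1 : (∏ i, chi ω ((e i + v u i) * z i))
            = (∏ i, chi ω (e i * z i)) * ∏ i, chi ω (v u i * z i) := by
          rw [← Finset.prod_mul_distrib]
          refine Finset.prod_congr rfl fun i _ => ?_
          rw [← chi_add hprim]
          congr 1
          ring
        rw [h1, Finset.prod_mul_distrib]
        ring
    _ = (if b = 0 then (q : ℂ) ^ n else 0) * (sq⁻¹ ^ m * (sq ^ m * ∏ i, f (z i))) := by
        have h2 : ∑ e : Fin m → ZMod q, ∏ i, (chi ω (e i * z i) * fhat (e i))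
            = ∏ i, ∑ x : ZMod q, chi ω (x * z i) * fhat x := by
          rw [← Fintype.piFinset_univ, ← Finset.prod_univ_sum (fun _ => Finset.univ)
            (fun i x => chi ω (x * z i) * fhat x)]
        rw [← Finset.sum_mul]
        simp only [hvz]
        rw [hub, h2]
        congr 2
        calc ∏ i, ∑ x : ZMod q, chi ω (x * z i) * fhat x = ∏ i, sq * f (z i) :=
              Finset.prod_congr rfl fun i _ => hdft (z i)
          _ = sq ^ m * ∏ i, f (z i) := by
              rw [Finset.prod_mul_distrib, Finset.prod_const, Finset.card_univ, Fintype.card_fin]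
    _ = (q : ℂ) ^ n * (if b = 0 then ∏ i, f (z i) else 0) := by
        have h3 : sq⁻¹ ^ m * sq ^ m = 1 := by
          rw [← mul_pow, inv_mul_cancel₀ hsqne, one_pow]
        have h4 : sq⁻¹ ^ m * (sq ^ m * ∏ i, f (z i)) = ∏ i, f (z i) := by
          rw [← mul_assoc, h3, one_mul]
        by_cases hb0 : b = 0
        · rw [if_pos hb0, if_pos hb0, h4]
        · rw [if_neg hb0, if_neg hb0, zero_mul, mul_zero]
end

section
/- Let q = ∏_{i=1}^k p_i with k > 1 and each p_i ≥ 2, m = n^k, and T = ∏_{i=1}^k ⌊p_i/2⌋. For any matrix A ∈ ℤ_q^{(n-1)×m} there exists a nonzero integer vector x ∈ ℤ^m with ‖x‖_∞ ≤ T and A·x ≡ 0 (mod q). -/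
/-! Pigeonhole (Siegel's lemma): the `(T + 1) ^ m` vectors with entries in `[0, T]` are sent by `A`
into a set of size `q ^ (n - 1)`, so two of them collide once `q ^ (n - 1) < (T + 1) ^ m`, and their
difference is the kernel vector. That inequality holds because `p < (⌊p/2⌋ + 1) ^ 2` for `p ≥ 2`
gives `q < (T + 1) ^ (2 * k)`, while `2 * k * (n - 1) ≤ n ^ k` for `k ≥ 2`. -/

open Finset Matrix

theorem Matrix.exists_ne_zero_abs_le_mulVec_eq_zero {R m ι : Type*} [Ring R] [Fintype R]
    [Fintype m] [Fintype ι] (A : Matrix m ι R) (T : ℕ)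
    (hcard : Fintype.card R ^ Fintype.card m < (T + 1) ^ Fintype.card ι) :
    ∃ x : ι → ℤ, x ≠ 0 ∧ (∀ j, |x j| ≤ T) ∧ A *ᵥ (fun j => (x j : R)) = 0 := by
  classical
  obtain ⟨a, b, hab, hAab⟩ := Fintype.exists_ne_map_eq_of_card_lt
    (fun v : ι → Fin (T + 1) => A *ᵥ fun j => ((v j : ℕ) : R)) (by simpa using hcard)
  refine ⟨fun j => (a j : ℤ) - (b j : ℤ), fun h => hab ?_, fun j => ?_, ?_⟩
  · ext j
    simpa [sub_eq_zero] using congrFun h j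
  · have := (a j).is_le
    have := (b j).is_le
    rw [abs_le]
    constructor <;> dsimp only <;> omega
  · have hsub : (fun j => (((a j : ℤ) - (b j : ℤ) : ℤ) : R)) =
        (fun j => ((a j : ℕ) : R)) - fun j => ((b j : ℕ) : R) := by
      ext j
      push_cast
      rfl
    rw [hsub, Matrix.mulVec_sub, hAab, sub_self]

theorem Nat.lt_div_two_add_one_sq {p : ℕ} (hp : 2 ≤ p) : p < (p / 2 + 1) ^ 2 := by
  have : 1 ≤ p / 2 := by omega
  nlinarith [Nat.lt_div_mul_add (a := p) two_pos]

theorem Finset.prod_lt_prod_div_two_add_one_pow {ι : Type*} [Fintype ι] [Nonempty ι]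
    (p : ι → ℕ) (hp : ∀ i, 2 ≤ p i) :
    ∏ i, p i < (∏ i, p i / 2 + 1) ^ (2 * Fintype.card ι) := by
  have hhalf : ∀ i, 1 ≤ p i / 2 := fun i => by have := hp i; omega
  calc ∏ i, p i < ∏ i, (p i / 2 + 1) ^ 2 :=
        prod_lt_prod_of_nonempty (fun i _ => by have := hp i; omega)
          (fun i _ => Nat.lt_div_two_add_one_sq (hp i)) univ_nonempty
    _ ≤ ∏ _i : ι, (∏ i, p i / 2 + 1) ^ 2 := by
        gcongr with i
        exact single_le_prod' (fun j _ => hhalf j) (mem_univ i)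
    _ = (∏ i, p i / 2 + 1) ^ (2 * Fintype.card ι) := by
        rw [prod_const, card_univ, ← pow_mul]

theorem Nat.two_mul_mul_sub_one_le_pow {k : ℕ} (hk : 2 ≤ k) (n : ℕ) :
    2 * k * (n - 1) ≤ n ^ k := by
  induction k, hk using Nat.le_induction with
  | base =>
    rcases n with _ | n
    · simp
    · rw [Nat.add_sub_cancel]
      nlinarith [sq_nonneg ((n : ℤ) - 1)]
  | succ k hk ih =>
    rcases Nat.lt_or_ge n 2 with hn | hn
    · interval_cases n <;> simp
    · calc 2 * (k + 1) * (n - 1) ≤ 2 * (2 * k * (n - 1)) := by nlinarith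
        _ ≤ 2 * n ^ k := by omega
        _ ≤ n * n ^ k := Nat.mul_le_mul_right _ hn
        _ = n ^ (k + 1) := by ring

theorem Nat.pow_sub_one_lt_pow_pow {k n a b : ℕ} (hk : 2 ≤ k) (hn : 0 < n) (hb : 1 < b)
    (hab : a < b ^ (2 * k)) : a ^ (n - 1) < b ^ n ^ k := by
  rcases Nat.eq_zero_or_pos (n - 1) with hn1 | hn1
  · rw [hn1, pow_zero]
    exact Nat.one_lt_pow (by positivity) hb
  · calc a ^ (n - 1) < (b ^ (2 * k)) ^ (n - 1) := Nat.pow_lt_pow_left hab hn1.ne'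
      _ = b ^ (2 * k * (n - 1)) := by rw [← pow_mul]
      _ ≤ b ^ n ^ k := Nat.pow_le_pow_right (by omega) (Nat.two_mul_mul_sub_one_le_pow hk n)

theorem stmt16 (k n : ℕ) (hk : 1 < k) (hn : 0 < n)
    (p : Fin k → ℕ) (hp : ∀ i, 2 ≤ p i)
    (q : ℕ) (hq : q = ∏ i, p i)
    (A : Matrix (Fin (n - 1)) (Fin (n ^ k)) (ZMod q)) :
    ∃ x : Fin (n ^ k) → ℤ, x ≠ 0 ∧ (∀ j, |x j| ≤ ((∏ i, p i / 2 : ℕ) : ℤ)) ∧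
      A.mulVec (fun j => (x j : ZMod q)) = 0 := by
  have : Nonempty (Fin k) := ⟨⟨0, by omega⟩⟩
  have hT : 1 ≤ ∏ i, p i / 2 := one_le_prod' fun i _ => by have := hp i; omega
  have hq_lt : q < (∏ i, p i / 2 + 1) ^ (2 * k) := by
    simpa [hq] using prod_lt_prod_div_two_add_one_pow p hp
  have : NeZero q := ⟨hq ▸ prod_ne_zero_iff.mpr fun i _ => by have := hp i; omega⟩
  refine A.exists_ne_zero_abs_le_mulVec_eq_zero _ ?_
  simpa using Nat.pow_sub_one_lt_pow_pow hk hn (by omega) hq_lt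
end
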